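/- arXiv:2106.03969 — 8 statements merged into one kernel-verified Lean document; each statement's English description precedes it below -/
import Mathlib

section
/- Let T = (V, E) be a finite tree and let μ : V × V → ℝ be a symmetric function that is multiplicative along T, with |μ(u, v)| ≤ 1 whenever {u, v} ∈ E. Then T is a maximum weight spanning tree of the complete graph on V for the weights |μ|: for every tree T'' on vertex set V, the sum of |μ(u, v)| over the edges {u, v} of T'' is at most the sum of |μ(u, v)| over the edges of T. -/
/-!
Exchange argument. If a tree `T` differs from `G`, pick an edge `uv` of `T` outside `G`. Deleting
it splits `T` into the components of `u` and of `v`, and the `G`-path from `u` to `v` crosses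
between them along some edge `ab ∉ T`; swapping `uv` for `ab` gives a tree sharing one more edge
with `G`. By multiplicativity `|μ u v|` is the product of `|μ|` along that path, whose factors are
at most `1`, so `|μ u v| ≤ |μ a b|` and the swap does not decrease the weight. Induct on the
number of edges of `T` outside `G`.
-/

open SimpleGraph

/-- A symmetric function `μ` is multiplicative along a graph `G` if `μ u u = 1` and `μ u v`
is the product of `μ` over the edges of any (hence, in a tree, the unique) path from `u` to
`v`. -/
def MultAlong {V : Type*} (G : SimpleGraph V) (μ : V → V → ℝ) : Prop :=
  (∀ u : V, μ u u = 1) ∧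
  ∀ (u v : V) (p : G.Walk u v), p.IsPath →
    μ u v = (p.darts.map fun d => μ d.fst d.snd).prod

/-- The total weight of the edges of `G`, for a weight function `f` on unordered pairs. -/
noncomputable def edgeWeightSum {V : Type*} [Fintype V] (G : SimpleGraph V)
    (f : Sym2 V → ℝ) : ℝ :=
  ∑ e ∈ G.edgeSet.toFinite.toFinset, f e

section AbsProd

variable {R : Type*} [CommRing R] [LinearOrder R] [IsStrictOrderedRing R] {l : List R}

theorem List.abs_prod_le_one (h : ∀ x ∈ l, |x| ≤ 1) : |l.prod| ≤ 1 := by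
  induction l with
  | nil => simp
  | cons x t ih =>
    rw [List.forall_mem_cons] at h
    rw [List.prod_cons, abs_mul]
    exact mul_le_one₀ h.1 (abs_nonneg _) (ih h.2)

theorem List.abs_prod_le_abs_of_mem (h : ∀ x ∈ l, |x| ≤ 1) {a : R} (ha : a ∈ l) :
    |l.prod| ≤ |a| := by
  rw [(List.perm_cons_erase ha).prod_eq, List.prod_cons, abs_mul]
  exact mul_le_of_le_one_right (abs_nonneg a)
    (List.abs_prod_le_one fun x hx => h x (List.mem_of_mem_erase hx))

end AbsProd

theorem MultAlong.abs_le_of_mem_darts {V : Type*} {G : SimpleGraph V} {μ : V → V → ℝ}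
    (hmult : MultAlong G μ) (hle : ∀ u v : V, G.Adj u v → |μ u v| ≤ 1) {u v : V}
    {p : G.Walk u v} (hp : p.IsPath) {d : G.Dart} (hd : d ∈ p.darts) :
    |μ u v| ≤ |μ d.fst d.snd| := by
  rw [hmult.2 u v p hp]
  refine List.abs_prod_le_abs_of_mem ?_ (List.mem_map_of_mem hd)
  intro x hx
  obtain ⟨d', -, rfl⟩ := List.mem_map.mp hx
  exact hle _ _ d'.adj

namespace SimpleGraph

variable {V : Type*}

theorem Walk.reachable_deleteEdges_or {G : SimpleGraph V} {u v x w : V} (q : G.Walk x w)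
    (hx : (G.deleteEdges {s(u, v)}).Reachable u x ∨ (G.deleteEdges {s(u, v)}).Reachable v x) :
    (G.deleteEdges {s(u, v)}).Reachable u w ∨ (G.deleteEdges {s(u, v)}).Reachable v w := by
  induction q with
  | nil => exact hx
  | @cons x y w hxy q ih =>
    apply ih
    by_cases hxy_uv : s(x, y) = s(u, v)
    · rcases Sym2.eq_iff.mp hxy_uv with ⟨-, rfl⟩ | ⟨-, rfl⟩
      · exact Or.inr .rfl
      · exact Or.inl .rfl
    · have hH : (G.deleteEdges {s(u, v)}).Adj x y := (deleteEdges_adj ..).mpr ⟨hxy, hxy_uv⟩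
      exact hx.imp (·.trans hH.reachable) (·.trans hH.reachable)

theorem IsTree.exists_mem_darts_isTree_deleteEdges_sup_edge {T G : SimpleGraph V}
    (hT : T.IsTree) {u v : V} (huv : T.Adj u v) (hGuv : ¬G.Adj u v) (p : G.Walk u v) :
    ∃ d ∈ p.darts, ¬T.Adj d.fst d.snd ∧
      (T.deleteEdges {s(u, v)} ⊔ edge d.fst d.snd).IsTree := by
  set H := T.deleteEdges {s(u, v)}
  have hH_uv : ¬H.Reachable u v :=
    isBridge_iff.mp (isAcyclic_iff_forall_adj_isBridge.mp hT.isAcyclic huv)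
  have hH_or (w : V) : H.Reachable u w ∨ H.Reachable v w :=
    (hT.connected.preconnected u w).elim fun q => q.reachable_deleteEdges_or (.inl .rfl)
  obtain ⟨d, hd, hua, hub⟩ := p.exists_boundary_dart {x | H.Reachable u x} .rfl hH_uv
  have hH_ab : ¬H.Reachable d.fst d.snd := fun h => hub (hua.trans h)
  refine ⟨d, hd, fun hT_ab => ?_, ?_,
    (hT.isAcyclic.anti (deleteEdges_le _)).sup_edge_of_not_reachable hH_ab⟩
  · by_cases hd_uv : s(d.fst, d.snd) = s(u, v)
    · exact hGuv (hd_uv ▸ d.adj : s(u, v) ∈ G.edgeSet)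
    · exact hH_ab ((deleteEdges_adj ..).mpr ⟨hT_ab, hd_uv⟩).reachable
  · have hreach_u (w : V) : (H ⊔ edge d.fst d.snd).Reachable u w := by
      have hle : H ≤ H ⊔ edge d.fst d.snd := le_sup_left
      have hvu : (H ⊔ edge d.fst d.snd).Reachable u v :=
        (hua.mono hle).trans <| (Adj.reachable (by simp [edge_adj, d.adj.ne])).trans
          ((hH_or d.snd).resolve_left hub |>.symm.mono hle)
      exact (hH_or w).elim (·.mono hle) fun h => hvu.trans (h.mono hle)
    exact connected_iff_exists_forall_reachable _ |>.mpr ⟨u, hreach_u⟩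

theorem edgeSet_deleteEdges_sup_edge (T : SimpleGraph V) (e : Sym2 V) {a b : V} (hab : a ≠ b) :
    (T.deleteEdges {e} ⊔ edge a b).edgeSet = insert s(a, b) (T.edgeSet \ {e}) := by
  rw [edgeSet_sup, edgeSet_deleteEdges, edgeSet_edge,
    sdiff_eq_left.mpr (Set.disjoint_singleton_left.mpr (by simpa using hab)), Set.union_singleton]

end SimpleGraph

section EdgeWeightSum

variable {V : Type*} [Fintype V]

theorem edgeWeightSum_eq_finsum (G : SimpleGraph V) (f : Sym2 V → ℝ) :
    edgeWeightSum G f = ∑ᶠ e ∈ G.edgeSet, f e :=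
  (finsum_mem_eq_finite_toFinset_sum f _).symm

theorem edgeWeightSum_deleteEdges_sup_edge_add {T : SimpleGraph V}
    (f : Sym2 V → ℝ) {e : Sym2 V} (he : e ∈ T.edgeSet) {a b : V} (hab : a ≠ b)
    (hT_ab : ¬T.Adj a b) :
    edgeWeightSum (T.deleteEdges {e} ⊔ edge a b) f + f e = edgeWeightSum T f + f s(a, b) := by
  have hab_notMem : s(a, b) ∉ T.edgeSet \ {e} := fun h => hT_ab h.1
  rw [edgeWeightSum_eq_finsum, edgeWeightSum_eq_finsum, edgeSet_deleteEdges_sup_edge T e hab,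
    finsum_mem_insert _ hab_notMem (Set.toFinite _)]
  conv_rhs => rw [← Set.insert_sdiff_self_of_mem he,
    finsum_mem_insert _ (fun h => h.2 rfl) (Set.toFinite _)]
  ring

theorem SimpleGraph.IsTree.edgeWeightSum_le_of_exchange {G : SimpleGraph V} (hG : G.IsTree)
    (f : Sym2 V → ℝ)
    (hex : ∀ T : SimpleGraph V, T.IsTree → ∀ u v : V, T.Adj u v → ¬G.Adj u v →
      ∃ a b : V, G.Adj a b ∧ ¬T.Adj a b ∧ f s(u, v) ≤ f s(a, b) ∧
        (T.deleteEdges {s(u, v)} ⊔ edge a b).IsTree)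
    {T : SimpleGraph V} (hT : T.IsTree) : edgeWeightSum T f ≤ edgeWeightSum G f := by
  induction hn : (T.edgeSet \ G.edgeSet).ncard generalizing T with
  | zero =>
    have hTG : T ≤ G := by
      rw [← edgeSet_subset_edgeSet, ← Set.sdiff_eq_empty]
      exact (Set.ncard_eq_zero (Set.toFinite _)).mp hn
    rw [le_antisymm hTG ((isTree_iff_minimal_connected.mp hG).le_of_le hT.connected hTG)]
  | succ n ih =>
    obtain ⟨⟨u, v⟩, he⟩ := Set.nonempty_of_ncard_ne_zero (hn.trans_ne n.succ_ne_zero)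
    obtain ⟨a, b, hG_ab, hT_ab, hfe, hT'⟩ := hex T hT u v he.1 he.2
    have hdiff : ((T.deleteEdges {s(u, v)} ⊔ edge a b).edgeSet \ G.edgeSet)
        = (T.edgeSet \ G.edgeSet) \ {s(u, v)} := by
      rw [edgeSet_deleteEdges_sup_edge T _ hG_ab.ne,
        Set.insert_sdiff_of_mem _ (show s(a, b) ∈ G.edgeSet from hG_ab), Set.sdiff_sdiff_comm]
    have hT'_le :=
      ih hT' (by rw [hdiff, Set.ncard_sdiff_singleton_of_mem he, hn, Nat.add_sub_cancel])
    linarith [edgeWeightSum_deleteEdges_sup_edge_add f he.1 hG_ab.ne hT_ab]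

end EdgeWeightSum

/-- **A tree is a maximum weight spanning tree for its own correlations.** If `μ` is a symmetric
function that is multiplicative along a finite tree `G` and `|μ| ≤ 1` on the edges of `G`, then
for every tree `G'` on the same vertex set, the sum of `|μ|` over the edges of `G'` is at most
the sum of `|μ|` over the edges of `G`. -/
theorem tree_is_max_weight_spanning_tree
    {V : Type*} [Fintype V]
    (G : SimpleGraph V) (hG : G.IsTree)
    (μ : V → V → ℝ) (hsymm : ∀ u v : V, μ u v = μ v u)
    (hmult : MultAlong G μ)
    (hle : ∀ u v : V, G.Adj u v → |μ u v| ≤ 1)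
    (G' : SimpleGraph V) (hG' : G'.IsTree) :
    edgeWeightSum G' (Sym2.lift ⟨fun u v => |μ u v|, fun u v => by dsimp only; rw [hsymm]⟩) ≤
      edgeWeightSum G (Sym2.lift ⟨fun u v => |μ u v|, fun u v => by dsimp only; rw [hsymm]⟩) := by
  refine hG.edgeWeightSum_le_of_exchange _ (fun T hT u v hT_uv hG_uv => ?_) hG'
  obtain ⟨p, hp⟩ := hG.connected.exists_isPath u v
  obtain ⟨d, hd, hT_d, hT'⟩ := hT.exists_mem_darts_isTree_deleteEdges_sup_edge hT_uv hG_uv p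
  exact ⟨d.fst, d.snd, d.adj, hT_d, by simpa using hmult.abs_le_of_mem_darts hle hp hd, hT'⟩
end

section
/- Fix δ > 0 and a positive integer n. Let A_1, …, A_n, B, C be independent {+1, −1}-valued random variables with E[A_t] = e^{−δ} for each t ∈ [n], E[B] = e^{−2δ}, and E[C] = 0. Define X_i = C·∏_{t=1}^{i} A_t and Y_i = B·C·∏_{t=1}^{i} A_t for each i ∈ [n]. Then for all i, j ∈ [n]: E[X_i] = E[Y_i] = 0, E[X_i X_j] = E[Y_i Y_j] = e^{−δ|i−j|}, and E[X_i Y_j] = e^{−δ|i−j| − 2δ}. -/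
/-!
Index the independent family as `g : Fin n ⊕ Bool → Ω → ℝ` (`inl t ↦ A_t`, `inr true ↦ C`,
`inr false ↦ B`). Every `X_i`, `Y_i` is a product of members of `g`, and since each member squares
to `1`, a product of two of them is again the product of `g` over a symmetric difference of index
sets. By independence its mean is the product of the means, namely `e^{-δ #s}` times a factor
`0` (if `C` occurs), `e^{-2δ}` (if `B` occurs alone) or `1`. The `A`-indices of `X_i X_j` are
`Iic i ∆ Iic j`, which has `|i - j|` elements.
-/

open MeasureTheory ProbabilityTheory Finset
open scoped symmDiff

theorem Finset.prod_mul_prod_eq_prod_symmDiff {ι M : Type*} [CommMonoid M] [DecidableEq ι]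
    {f : ι → M} {s t : Finset ι} (hf : ∀ i ∈ s ∩ t, f i * f i = 1) :
    (∏ i ∈ s, f i) * ∏ i ∈ t, f i = ∏ i ∈ s ∆ t, f i := by
  have hsq : (∏ i ∈ s ∩ t, f i) * ∏ i ∈ s ∩ t, f i = 1 := by
    rw [← prod_mul_distrib]
    exact prod_eq_one hf
  have hunion : ∏ i ∈ s ∪ t, f i = (∏ i ∈ s ∆ t, f i) * ∏ i ∈ s ∩ t, f i := by
    rw [symmDiff_eq_sup_sdiff_inf]
    exact (prod_sdiff inter_subset_union).symm
  rw [← prod_union_inter, hunion, mul_assoc, hsq, mul_one]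

theorem Finset.disjSum_symmDiff_disjSum {α β : Type*} [DecidableEq α] [DecidableEq β]
    (s s' : Finset α) (t t' : Finset β) :
    s.disjSum t ∆ s'.disjSum t' = (s ∆ s').disjSum (t ∆ t') := by
  ext (a | b) <;> simp [mem_symmDiff]

theorem Fin.card_Iic_symmDiff_Iic {n : ℕ} (i j : Fin n) :
    (#(Iic i ∆ Iic j) : ℝ) = |((i : ℕ) : ℝ) - ((j : ℕ) : ℝ)| := by
  wlog hij : i ≤ j generalizing i j
  · rw [symmDiff_comm, this j i (le_of_not_ge hij), abs_sub_comm]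
  have hsub : Iic i ⊆ Iic j := Iic_subset_Iic.mpr hij
  have hij' : (i : ℕ) ≤ j := hij
  rw [symmDiff_of_le hsub, card_sdiff_of_subset hsub, Fin.card_Iic, Fin.card_Iic,
    Nat.add_sub_add_right, Nat.cast_sub hij', abs_sub_comm,
    abs_of_nonneg (sub_nonneg.mpr (Nat.cast_le.mpr hij'))]

theorem ProbabilityTheory.iIndepFun.integral_finset_prod_eq_prod_integral {Ω ι : Type*}
    [MeasurableSpace Ω] {μ : Measure Ω} {X : ι → Ω → ℝ} (hX : iIndepFun X μ)
    (mX : ∀ i, AEStronglyMeasurable (X i) μ) (s : Finset ι) :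
    ∫ ω, ∏ i ∈ s, X i ω ∂μ = ∏ i ∈ s, ∫ ω, X i ω ∂μ := by
  simp only [← prod_coe_sort s]
  exact (hX.precomp Subtype.val_injective).integral_fun_prod_eq_prod_integral fun i => mX i

theorem counterexample_P_moments_general
    {Ω : Type*} [MeasurableSpace Ω] (μ : Measure Ω)
    (δ : ℝ) (n : ℕ)
    (A : Fin n → Ω → ℝ) (B C : Ω → ℝ)
    (hval : ∀ (i : Fin n ⊕ Bool) (ω : Ω),
      Sum.elim A (fun b => if b then C else B) i ω = 1 ∨
      Sum.elim A (fun b => if b then C else B) i ω = -1)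
    (hmeas : ∀ i : Fin n ⊕ Bool, Measurable (Sum.elim A (fun b => if b then C else B) i))
    (hindep : iIndepFun (m := fun _ : Fin n ⊕ Bool => Real.measurableSpace)
      (Sum.elim A (fun b => if b then C else B)) μ)
    (hA : ∀ t : Fin n, ∫ ω, A t ω ∂μ = Real.exp (-δ))
    (hB : ∫ ω, B ω ∂μ = Real.exp (-2 * δ))
    (hC : ∫ ω, C ω ∂μ = 0)
    (X Y : Fin n → Ω → ℝ)
    (hX : ∀ (i : Fin n) (ω : Ω), X i ω = C ω * ∏ t ∈ Finset.Iic i, A t ω)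
    (hY : ∀ (i : Fin n) (ω : Ω), Y i ω = B ω * C ω * ∏ t ∈ Finset.Iic i, A t ω) :
    (∀ i : Fin n, ∫ ω, X i ω ∂μ = 0) ∧
    (∀ i : Fin n, ∫ ω, Y i ω ∂μ = 0) ∧
    (∀ i j : Fin n, ∫ ω, X i ω * X j ω ∂μ = Real.exp (-δ * |((i : ℕ) : ℝ) - ((j : ℕ) : ℝ)|)) ∧
    (∀ i j : Fin n, ∫ ω, Y i ω * Y j ω ∂μ = Real.exp (-δ * |((i : ℕ) : ℝ) - ((j : ℕ) : ℝ)|)) ∧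
    (∀ i j : Fin n, ∫ ω, X i ω * Y j ω ∂μ =
      Real.exp (-δ * |((i : ℕ) : ℝ) - ((j : ℕ) : ℝ)| - 2 * δ)) := by
  set g : Fin n ⊕ Bool → Ω → ℝ := Sum.elim A (fun b => if b then C else B)
  have hXg (i : Fin n) (ω : Ω) : X i ω = ∏ k ∈ (Iic i).disjSum {true}, g k ω := by
    simp [hX, prod_disjSum, g, mul_comm]
  have hYg (i : Fin n) (ω : Ω) : Y i ω = ∏ k ∈ (Iic i).disjSum univ, g k ω := by
    simp [hY, prod_disjSum, g]
    ring
  have hmul (S T : Finset (Fin n ⊕ Bool)) (ω : Ω) :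
      (∏ k ∈ S, g k ω) * ∏ k ∈ T, g k ω = ∏ k ∈ S ∆ T, g k ω :=
    prod_mul_prod_eq_prod_symmDiff fun k _ => by rcases hval k ω with h | h <;> simp [h]
  have hmoment (s : Finset (Fin n)) (t : Finset Bool) :
      ∫ ω, ∏ k ∈ s.disjSum t, g k ω ∂μ =
        Real.exp (-δ * #s) * ∏ b ∈ t, if b then 0 else Real.exp (-2 * δ) := by
    rw [hindep.integral_finset_prod_eq_prod_integral fun k => (hmeas k).aestronglyMeasurable,
      prod_disjSum]
    congr 1
    · simp [g, hA, ← Real.exp_nat_mul, mul_comm]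
    · exact prod_congr rfl fun b _ => by cases b <;> simp [g, hB, hC]
  refine ⟨fun i => ?_, fun i => ?_, fun i j => ?_, fun i j => ?_, fun i j => ?_⟩
  · simp only [hXg, hmoment]
    simp
  · simp only [hYg, hmoment]
    simp
  · simp only [hXg, hmul, disjSum_symmDiff_disjSum, hmoment, Fin.card_Iic_symmDiff_Iic]
    simp
  · simp only [hYg, hmul, disjSum_symmDiff_disjSum, hmoment, Fin.card_Iic_symmDiff_Iic]
    simp
  · have hB_only : ({true} ∆ univ : Finset Bool) = {false} := by decide
    simp only [hXg, hYg, hmul, disjSum_symmDiff_disjSum, hB_only, hmoment,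
      Fin.card_Iic_symmDiff_Iic]
    simp [sub_eq_add_neg, Real.exp_add]

/-- **Moments of the counterexample distribution `P`.** Let `A_1, …, A_n, B, C` be independent
`{+1,−1}`-valued random variables with `E[A_t] = e^{−δ}`, `E[B] = e^{−2δ}`, `E[C] = 0`, and set
`X_i = C·∏_{t≤i} A_t`, `Y_i = B·C·∏_{t≤i} A_t`. Then `E[X_i] = E[Y_i] = 0`,
`E[X_i X_j] = E[Y_i Y_j] = e^{−δ|i−j|}`, and `E[X_i Y_j] = e^{−δ|i−j|−2δ}`. -/
theorem counterexample_P_moments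
    {Ω : Type*} [MeasurableSpace Ω] (μ : Measure Ω) [IsProbabilityMeasure μ]
    (δ : ℝ) (hδ : 0 < δ) (n : ℕ) (hn : 0 < n)
    (A : Fin n → Ω → ℝ) (B C : Ω → ℝ)
    (hval : ∀ (i : Fin n ⊕ Bool) (ω : Ω),
      Sum.elim A (fun b => if b then C else B) i ω = 1 ∨
      Sum.elim A (fun b => if b then C else B) i ω = -1)
    (hmeas : ∀ i : Fin n ⊕ Bool, Measurable (Sum.elim A (fun b => if b then C else B) i))
    (hindep : iIndepFun (m := fun _ : Fin n ⊕ Bool => Real.measurableSpace)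
      (Sum.elim A (fun b => if b then C else B)) μ)
    (hA : ∀ t : Fin n, ∫ ω, A t ω ∂μ = Real.exp (-δ))
    (hB : ∫ ω, B ω ∂μ = Real.exp (-2 * δ))
    (hC : ∫ ω, C ω ∂μ = 0)
    (X Y : Fin n → Ω → ℝ)
    (hX : ∀ (i : Fin n) (ω : Ω), X i ω = C ω * ∏ t ∈ Finset.Iic i, A t ω)
    (hY : ∀ (i : Fin n) (ω : Ω), Y i ω = B ω * C ω * ∏ t ∈ Finset.Iic i, A t ω) :
    (∀ i : Fin n, ∫ ω, X i ω ∂μ = 0) ∧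
    (∀ i : Fin n, ∫ ω, Y i ω ∂μ = 0) ∧
    (∀ i j : Fin n, ∫ ω, X i ω * X j ω ∂μ = Real.exp (-δ * |((i : ℕ) : ℝ) - ((j : ℕ) : ℝ)|)) ∧
    (∀ i j : Fin n, ∫ ω, Y i ω * Y j ω ∂μ = Real.exp (-δ * |((i : ℕ) : ℝ) - ((j : ℕ) : ℝ)|)) ∧
    (∀ i j : Fin n, ∫ ω, X i ω * Y j ω ∂μ =
      Real.exp (-δ * |((i : ℕ) : ℝ) - ((j : ℕ) : ℝ)| - 2 * δ)) :=
  counterexample_P_moments_general μ δ n A B C hval hmeas hindep hA hB hC X Y hX hY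
end

section
/- Fix δ > 0 and a positive integer n ≥ 2. Consider the complete graph on the 2n-element vertex set {x_1, …, x_n, y_1, …, y_n} with symmetric edge weights w given by w(x_i, x_j) = w(y_i, y_j) = e^{−δ|i−j|} and w(x_i, y_j) = e^{−δ|i−j| − 2δ}. Let S = {{x_i, x_{i+1}} : 1 ≤ i ≤ n−1} ∪ {{y_i, y_{i+1}} : 1 ≤ i ≤ n−1}. Then every maximum weight spanning tree of this weighted complete graph contains every edge of S; consequently, every maximum weight spanning tree consists of the path x_1, …, x_n, the path y_1, …, y_n, and exactly one additional edge of the form {x_i, y_j}. -/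
/-!
Exchange argument. If a maximum weight spanning tree `T` missed a consecutive edge
`{x_i, x_{i+1}}`, the `T`-path between its ends would have to leave `{x_1, …, x_i}` through an
edge that is not consecutive; such an edge weighs at most `e^{-2δ} < e^{-δ}`, so swapping it for
`{x_i, x_{i+1}}` would give a heavier spanning tree. Hence `T` contains all `2n - 2` consecutive
edges, and its one remaining edge must join the two paths because `T` is connected.
-/

open SimpleGraph

/-- The set of consecutive edges `{x_i, x_{i+1}}` and `{y_i, y_{i+1}}` on the vertex set
`{x_1, …, x_n} ⊔ {y_1, …, y_n}` (with `x`'s on the left, `y`'s on the right). -/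
def pathEdges (n : ℕ) : Set (Sym2 (Fin n ⊕ Fin n)) :=
  {e | ∃ (i : Fin n) (h : (i : ℕ) + 1 < n),
      e = s(Sum.inl i, Sum.inl ⟨(i : ℕ) + 1, h⟩) ∨
      e = s(Sum.inr i, Sum.inr ⟨(i : ℕ) + 1, h⟩)}

namespace SimpleGraph

variable {V : Type*} {T : SimpleGraph V} {x y : V}

lemma edgeSet_sup_edge_deleteEdges (hxy : x ≠ y) {f : Sym2 V} (hf : s(x, y) ≠ f) :
    ((T ⊔ edge x y).deleteEdges {f}).edgeSet = insert s(x, y) (T.edgeSet \ {f}) := by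
  rw [edgeSet_deleteEdges, edgeSet_sup, edgeSet_edge_of_ne hxy, Set.union_singleton,
    Set.insert_sdiff_of_notMem _ (Set.mem_singleton_iff.not.2 hf)]

lemma not_isBridge_sup_edge_of_mem_edges (hxy : x ≠ y) (hnadj : ¬ T.Adj x y)
    {p : T.Walk x y} (hp : p.IsPath) {f : Sym2 V} (hf : f ∈ p.edges) :
    ¬ (T ⊔ edge x y).IsBridge f := by
  have hle : T ≤ T ⊔ edge x y := le_sup_left
  have hadj : (T ⊔ edge x y).Adj y x :=
    Or.inr ((edge_adj _ _ _ _).2 ⟨Or.inr ⟨rfl, rfl⟩, hxy.symm⟩)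
  have hcycle : (Walk.cons hadj (p.mapLe hle)).IsCycle := by
    refine Path.cons_isCycle ⟨_, hp.mapLe hle⟩ hadj ?_
    rw [Walk.edges_mapLe_eq_edges, Sym2.eq_swap]
    exact fun h ↦ hnadj (p.adj_of_mem_edges h)
  rw [isBridge_iff_forall_cycle_notMem (edgeSet_mono hle (p.edges_subset_edgeSet hf))]
  push Not
  exact ⟨y, _, hcycle, by simp [hf]⟩

lemma IsTree.sup_edge_deleteEdges [Finite V] (hT : T.IsTree) (hxy : x ≠ y)
    (hnadj : ¬ T.Adj x y) {p : T.Walk x y} (hp : p.IsPath) {f : Sym2 V} (hf : f ∈ p.edges) :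
    ((T ⊔ edge x y).deleteEdges {f}).IsTree := by
  have hfT : f ∈ T.edgeSet := p.edges_subset_edgeSet hf
  rw [isTree_iff_connected_and_card] at hT ⊢
  refine ⟨?_, ?_⟩
  · induction f using Sym2.ind with
    | _ c d =>
      exact (hT.1.mono le_sup_left).connected_delete_edge_of_not_isBridge
        (not_isBridge_sup_edge_of_mem_edges hxy hnadj hp hf)
  · rw [edgeSet_sup_edge_deleteEdges hxy (by rintro rfl; exact hnadj hfT), Nat.card_coe_set_eq,
      Set.ncard_exchange (s := T.edgeSet) hnadj hfT, ← Nat.card_coe_set_eq, hT.2]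

lemma Connected.exists_adj_inl_inr {α β : Type*} [Nonempty α] [Nonempty β]
    {G : SimpleGraph (α ⊕ β)} (hG : G.Connected) : ∃ a b, G.Adj (.inl a) (.inr b) := by
  obtain ⟨p⟩ := hG.preconnected (.inl (Classical.arbitrary α)) (.inr (Classical.arbitrary β))
  obtain ⟨⟨⟨u, v⟩, hadj⟩, -, ⟨a, rfl⟩, hv⟩ :=
    p.exists_boundary_dart (Set.range .inl) (by simp) (by simp)
  cases v with
  | inl a' => exact absurd ⟨a', rfl⟩ hv
  | inr b => exact ⟨a, b, hadj⟩

end SimpleGraph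

lemma edgeWeightSum_add_of_edgeSet_eq_insert_sdiff {V : Type*} [Fintype V]
    {G G' : SimpleGraph V} (c : Sym2 V → ℝ) {e f : Sym2 V} (he : e ∉ G.edgeSet)
    (hf : f ∈ G.edgeSet) (hG' : G'.edgeSet = insert e (G.edgeSet \ {f})) :
    edgeWeightSum G' c + c f = edgeWeightSum G c + c e := by
  classical
  have hfin : G'.edgeSet.toFinite.toFinset = insert e (G.edgeSet.toFinite.toFinset.erase f) := by
    ext; simp [hG', and_comm]
  rw [edgeWeightSum, edgeWeightSum, hfin, Finset.sum_insert (by simp [he]), add_assoc,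
    Finset.sum_erase_add _ _ (by simpa using hf), add_comm]

def IsMaxWeightSpanningTree {V : Type*} [Fintype V] (c : Sym2 V → ℝ) (T : SimpleGraph V) :
    Prop :=
  T.IsTree ∧ ∀ T' : SimpleGraph V, T'.IsTree → edgeWeightSum T' c ≤ edgeWeightSum T c

/-- Exchanging `f` for `s(x, y)` gives another spanning tree. -/
lemma IsMaxWeightSpanningTree.le_of_mem_edges_of_isPath {V : Type*} [Fintype V]
    {c : Sym2 V → ℝ} {T : SimpleGraph V} {x y : V} (hT : IsMaxWeightSpanningTree c T)
    (hxy : x ≠ y) (hnadj : ¬ T.Adj x y) {p : T.Walk x y} (hp : p.IsPath) {f : Sym2 V}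
    (hf : f ∈ p.edges) : c s(x, y) ≤ c f := by
  have hfT : f ∈ T.edgeSet := p.edges_subset_edgeSet hf
  have hexchange := edgeWeightSum_add_of_edgeSet_eq_insert_sdiff c hnadj hfT
    (edgeSet_sup_edge_deleteEdges hxy (by rintro rfl; exact hnadj hfT))
  have hle := hT.2 _ (hT.1.sup_edge_deleteEdges hxy hnadj hp hf)
  linarith

namespace TwoPaths

open Sum

variable {n : ℕ}

def level : Fin n ⊕ Fin n → ℕ := Sum.elim Fin.val Fin.val

lemma eq_of_isLeft_eq_of_level_eq {u v : Fin n ⊕ Fin n} (hside : u.isLeft = v.isLeft)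
    (hlevel : level u = level v) : u = v := by
  cases u <;> cases v <;> simp_all [level, Fin.ext_iff]

lemma mk_mem_pathEdges_iff {u v : Fin n ⊕ Fin n} :
    s(u, v) ∈ pathEdges n ↔
      u.isLeft = v.isLeft ∧ (level u + 1 = level v ∨ level v + 1 = level u) := by
  constructor
  · rintro ⟨i, hi, h | h⟩ <;> rcases Sym2.eq_iff.1 h with ⟨rfl, rfl⟩ | ⟨rfl, rfl⟩ <;>
      simp [level]
  · rintro ⟨hside, hlevel⟩
    rcases u with a | a <;> rcases v with b | b <;>
      simp only [isLeft_inl, isLeft_inr, reduceCtorEq] at hside <;>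
      simp only [level, elim_inl, elim_inr] at hlevel <;>
      simp [pathEdges, Fin.ext_iff] <;>
      rcases hlevel with h | h
    all_goals first
      | exact ⟨a, by omega, .inl ⟨rfl, h.symm⟩⟩
      | exact ⟨b, by omega, .inr ⟨h.symm, rfl⟩⟩

lemma pathEdges_eq_range (m : ℕ) :
    pathEdges (m + 1) = Set.range (Sum.elim (fun i : Fin m ↦ s(inl i.castSucc, inl i.succ))
      (fun i : Fin m ↦ s(inr i.castSucc, inr i.succ))) := by
  ext e
  constructor
  · rintro ⟨i, hi, rfl | rfl⟩
    · exact ⟨inl ⟨i, by omega⟩, rfl⟩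
    · exact ⟨inr ⟨i, by omega⟩, rfl⟩
  · rintro ⟨i | i, rfl⟩
    · exact ⟨i.castSucc, by simp, Or.inl rfl⟩
    · exact ⟨i.castSucc, by simp, Or.inr rfl⟩

lemma ncard_pathEdges : (pathEdges n).ncard = 2 * (n - 1) := by
  rcases n with _ | m
  · simp [pathEdges]
  rw [pathEdges_eq_range, Set.ncard_range_of_injective]
  · simp only [Nat.card_eq_fintype_card, Fintype.card_sum, Fintype.card_fin,
      add_tsub_cancel_right]
    omega
  refine Function.Injective.sumElim ?_ ?_ ?_ <;> intro i j <;> simp [Fin.ext_iff] <;> omega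

/-- The weights of the statement, in terms of the sides and levels of the two vertices. -/
noncomputable def weight (δ : ℝ) (u v : Fin n ⊕ Fin n) : ℝ :=
  Real.exp (-δ * |(level u : ℝ) - level v| - if u.isLeft = v.isLeft then 0 else 2 * δ)

lemma weight_comm (δ : ℝ) (u v : Fin n ⊕ Fin n) : weight δ u v = weight δ v u := by
  simp only [weight, abs_sub_comm (level u : ℝ), eq_comm (a := u.isLeft)]

lemma eq_weight {δ : ℝ} {w : Fin n ⊕ Fin n → Fin n ⊕ Fin n → ℝ}
    (hsymm : ∀ u v, w u v = w v u)
    (hxx : ∀ i j : Fin n, w (inl i) (inl j) =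
      Real.exp (-δ * |((i : ℕ) : ℝ) - ((j : ℕ) : ℝ)|))
    (hyy : ∀ i j : Fin n, w (inr i) (inr j) =
      Real.exp (-δ * |((i : ℕ) : ℝ) - ((j : ℕ) : ℝ)|))
    (hxy : ∀ i j : Fin n, w (inl i) (inr j) =
      Real.exp (-δ * |((i : ℕ) : ℝ) - ((j : ℕ) : ℝ)| - 2 * δ)) :
    w = weight δ := by
  funext u v
  rcases u with i | i <;> rcases v with j | j
  · simp [hxx, weight, level]
  · simp [hxy, weight, level]
  · rw [hsymm, hxy, abs_sub_comm]
    simp [weight, level]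
  · simp [hyy, weight, level]

lemma weight_eq_exp_of_mk_mem_pathEdges (δ : ℝ) {u v : Fin n ⊕ Fin n}
    (h : s(u, v) ∈ pathEdges n) : weight δ u v = Real.exp (-δ) := by
  obtain ⟨hside, hlevel⟩ := mk_mem_pathEdges_iff.1 h
  have habs : |(level u : ℝ) - level v| = 1 := by
    rcases hlevel with h | h <;> rw [← h] <;> push_cast <;> simp
  simp [weight, hside, habs]

lemma weight_lt_exp_of_mk_notMem_pathEdges {δ : ℝ} (hδ : 0 < δ) {u v : Fin n ⊕ Fin n}
    (huv : u ≠ v) (h : s(u, v) ∉ pathEdges n) : weight δ u v < Real.exp (-δ) := by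
  refine Real.exp_lt_exp.2 ?_
  by_cases hside : u.isLeft = v.isLeft
  · have hgap : level u + 2 ≤ level v ∨ level v + 2 ≤ level u := by
      have := mt (eq_of_isLeft_eq_of_level_eq hside) huv
      have := mt (mk_mem_pathEdges_iff.2 ⟨hside, ·⟩) h
      omega
    have habs : 2 ≤ |(level u : ℝ) - level v| := by
      rcases hgap with hg | hg
      · have : (level u : ℝ) + 2 ≤ level v := by exact_mod_cast hg
        exact le_abs.2 (.inr (by linarith))
      · have : (level v : ℝ) + 2 ≤ level u := by exact_mod_cast hg
        exact le_abs.2 (.inl (by linarith))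
    simp only [hside, if_true]
    nlinarith
  · simp only [hside, if_false]
    nlinarith [abs_nonneg ((level u : ℝ) - level v)]

def pathIic (u : Fin n ⊕ Fin n) : Set (Fin n ⊕ Fin n) :=
  {z | z.isLeft = u.isLeft ∧ level z ≤ level u}

lemma eq_of_mk_mem_pathEdges_of_mem_pathIic {u v a b : Fin n ⊕ Fin n}
    (hside : u.isLeft = v.isLeft) (hlevel : level u + 1 = level v) (ha : a ∈ pathIic u)
    (hb : b ∉ pathIic u) (hab : s(a, b) ∈ pathEdges n) : a = u ∧ b = v := by
  obtain ⟨hside', hlevel'⟩ := mk_mem_pathEdges_iff.1 hab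
  obtain ⟨ha_side, ha_level⟩ := ha
  have hb_level : level u < level b := by
    by_contra h
    exact hb ⟨hside' ▸ ha_side, by omega⟩
  exact ⟨eq_of_isLeft_eq_of_level_eq ha_side (by omega),
    eq_of_isLeft_eq_of_level_eq (by rw [← hside', ha_side, hside]) (by omega)⟩

theorem pathEdges_subset_edgeSet {δ : ℝ} (hδ : 0 < δ) {T : SimpleGraph (Fin n ⊕ Fin n)}
    (hT : IsMaxWeightSpanningTree (Sym2.lift ⟨weight δ, weight_comm δ⟩) T) :
    pathEdges n ⊆ T.edgeSet := by
  suffices h : ∀ u v, u.isLeft = v.isLeft → level u + 1 = level v → T.Adj u v by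
    intro e he
    induction e using Sym2.ind with
    | _ u v =>
      obtain ⟨hside, hlevel | hlevel⟩ := mk_mem_pathEdges_iff.1 he
      · exact h u v hside hlevel
      · exact (h v u hside.symm hlevel).symm
  intro u v hside hlevel
  by_contra hnadj
  have huv : u ≠ v := by rintro rfl; omega
  obtain ⟨q⟩ := hT.1.connected.preconnected u v
  -- The tree path from `u` to `v` leaves `pathIic u`, and not along the missing edge `s(u, v)`.
  obtain ⟨⟨⟨a, b⟩, hab⟩, hd, ha, hb⟩ := q.toPath.1.exists_boundary_dart (pathIic u)
    ⟨rfl, le_rfl⟩ (fun h ↦ by have := h.2; omega)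
  have hab_mem : s(a, b) ∈ q.toPath.1.edges := by
    rw [Walk.edges_eq_map_darts]
    exact List.mem_map_of_mem hd
  have hab_notMem : s(a, b) ∉ pathEdges n := fun h ↦ by
    obtain ⟨rfl, rfl⟩ := eq_of_mk_mem_pathEdges_of_mem_pathIic hside hlevel ha hb h
    exact hnadj hab
  have hle : weight δ u v ≤ weight δ a b :=
    hT.le_of_mem_edges_of_isPath huv hnadj q.toPath.2 hab_mem
  rw [weight_eq_exp_of_mk_mem_pathEdges δ (mk_mem_pathEdges_iff.2 ⟨hside, .inl hlevel⟩)] at hle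
  exact (weight_lt_exp_of_mk_notMem_pathEdges hδ hab.ne hab_notMem).not_ge hle

theorem exists_edgeSet_eq_pathEdges_union {T : SimpleGraph (Fin n ⊕ Fin n)} (hT : T.IsTree)
    (hsub : pathEdges n ⊆ T.edgeSet) :
    ∃ i j : Fin n, T.edgeSet = pathEdges n ∪ {s(inl i, inr j)} := by
  have : Nonempty (Fin n) := by
    obtain ⟨z⟩ := hT.connected.nonempty
    exact ⟨z.elim id id⟩
  obtain ⟨i, j, hij⟩ := hT.connected.exists_adj_inl_inr
  have hcross : s(inl i, inr j) ∉ pathEdges n := by simp [mk_mem_pathEdges_iff]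
  refine ⟨i, j, (Set.eq_of_subset_of_ncard_le
    (Set.union_subset hsub (Set.singleton_subset_iff.2 hij)) ?_ (Set.toFinite _)).symm⟩
  have hcard := (isTree_iff_connected_and_card.1 hT).2
  simp only [Nat.card_coe_set_eq, Nat.card_eq_fintype_card, Fintype.card_sum,
    Fintype.card_fin] at hcard
  rw [Set.union_singleton, Set.ncard_insert_of_notMem hcross, ncard_pathEdges]
  have := Fin.pos_iff_nonempty.2 ‹_›
  omega

end TwoPaths

open TwoPaths in
theorem max_weight_spanning_tree_structure_general
    (δ : ℝ) (hδ : 0 < δ) (n : ℕ)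
    (w : (Fin n ⊕ Fin n) → (Fin n ⊕ Fin n) → ℝ)
    (hsymm : ∀ u v, w u v = w v u)
    (hxx : ∀ i j : Fin n, w (Sum.inl i) (Sum.inl j) =
      Real.exp (-δ * |((i : ℕ) : ℝ) - ((j : ℕ) : ℝ)|))
    (hyy : ∀ i j : Fin n, w (Sum.inr i) (Sum.inr j) =
      Real.exp (-δ * |((i : ℕ) : ℝ) - ((j : ℕ) : ℝ)|))
    (hxy : ∀ i j : Fin n, w (Sum.inl i) (Sum.inr j) =
      Real.exp (-δ * |((i : ℕ) : ℝ) - ((j : ℕ) : ℝ)| - 2 * δ))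
    (T : SimpleGraph (Fin n ⊕ Fin n)) (hT : T.IsTree)
    (hmax : ∀ T' : SimpleGraph (Fin n ⊕ Fin n), T'.IsTree →
      edgeWeightSum T' (Sym2.lift ⟨w, hsymm⟩) ≤ edgeWeightSum T (Sym2.lift ⟨w, hsymm⟩)) :
    pathEdges n ⊆ T.edgeSet ∧
    ∃ i₀ j₀ : Fin n, T.edgeSet = pathEdges n ∪ {s(Sum.inl i₀, Sum.inr j₀)} := by
  obtain rfl : w = weight δ := eq_weight hsymm hxx hyy hxy
  have hsub : pathEdges n ⊆ T.edgeSet := pathEdges_subset_edgeSet hδ ⟨hT, hmax⟩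
  exact ⟨hsub, exists_edgeSet_eq_pathEdges_union hT hsub⟩

/-- **Structure of maximum weight spanning trees for the counterexample weights.** Consider the
complete graph on `{x_1, …, x_n, y_1, …, y_n}` with weights `w(x_i,x_j) = w(y_i,y_j) =
e^{−δ|i−j|}` and `w(x_i,y_j) = e^{−δ|i−j|−2δ}`. Every maximum weight spanning tree contains all
consecutive edges `{x_i,x_{i+1}}` and `{y_i,y_{i+1}}`, and consequently consists of the path
`x_1, …, x_n`, the path `y_1, …, y_n`, and exactly one additional edge `{x_{i₀}, y_{j₀}}`. -/
theorem max_weight_spanning_tree_structure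
    (δ : ℝ) (hδ : 0 < δ) (n : ℕ) (hn : 2 ≤ n)
    (w : (Fin n ⊕ Fin n) → (Fin n ⊕ Fin n) → ℝ)
    (hsymm : ∀ u v, w u v = w v u)
    (hxx : ∀ i j : Fin n, w (Sum.inl i) (Sum.inl j) =
      Real.exp (-δ * |((i : ℕ) : ℝ) - ((j : ℕ) : ℝ)|))
    (hyy : ∀ i j : Fin n, w (Sum.inr i) (Sum.inr j) =
      Real.exp (-δ * |((i : ℕ) : ℝ) - ((j : ℕ) : ℝ)|))
    (hxy : ∀ i j : Fin n, w (Sum.inl i) (Sum.inr j) =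
      Real.exp (-δ * |((i : ℕ) : ℝ) - ((j : ℕ) : ℝ)| - 2 * δ))
    (T : SimpleGraph (Fin n ⊕ Fin n)) (hT : T.IsTree)
    (hmax : ∀ T' : SimpleGraph (Fin n ⊕ Fin n), T'.IsTree →
      edgeWeightSum T' (Sym2.lift ⟨w, hsymm⟩) ≤ edgeWeightSum T (Sym2.lift ⟨w, hsymm⟩)) :
    pathEdges n ⊆ T.edgeSet ∧
    ∃ i₀ j₀ : Fin n, T.edgeSet = pathEdges n ∪ {s(Sum.inl i₀, Sum.inr j₀)} :=
  max_weight_spanning_tree_structure_general δ hδ n w hsymm hxx hyy hxy T hT hmax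
end

section
/- Let T be a finite tree with nonnegative edge lengths and associated tree metric d, let ε ≥ 0, and let x, y, z, y' be vertices of T such that y lies on the unique path from x to z. If |d(y', x) − d(y, x)| ≤ ε and |d(y', z) − d(y, z)| ≤ ε, then d(y, y') ≤ ε. -/
open SimpleGraph

/-- `d` is the tree metric on the tree `G` with (nonnegative, symmetric) edge lengths `ℓ`:
the distance between two vertices is the sum of the edge lengths along any (hence, in a tree,
the unique) path between them. -/
def IsTreeMetric {V : Type*} (G : SimpleGraph V) (ℓ : V → V → ℝ) (d : V → V → ℝ) : Prop :=
  G.IsTree ∧ (∀ u v : V, G.Adj u v → ℓ u v = ℓ v u) ∧ (∀ u v : V, G.Adj u v → 0 ≤ ℓ u v) ∧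
  ∀ (u v : V) (p : G.Walk u v), p.IsPath →
    d u v = (p.darts.map fun dd => ℓ dd.fst dd.snd).sum

namespace TreeMetricAux

variable {V : Type*} {G : SimpleGraph V} {ℓ : V → V → ℝ}

/-- The length of a walk with respect to edge lengths `ℓ`. -/
noncomputable def wlen (ℓ : V → V → ℝ) {u v : V} (p : G.Walk u v) : ℝ :=
  (p.darts.map fun dd => ℓ dd.fst dd.snd).sum

lemma wlen_append {u v w : V} (p : G.Walk u v) (q : G.Walk v w) :
    wlen ℓ (p.append q) = wlen ℓ p + wlen ℓ q := by
  simp [wlen, Walk.darts_append]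

lemma wlen_reverse (hsym : ∀ u v : V, G.Adj u v → ℓ u v = ℓ v u)
    {u v : V} (p : G.Walk u v) : wlen ℓ p.reverse = wlen ℓ p := by
  simp only [wlen, Walk.darts_reverse, List.map_reverse, List.sum_reverse, List.map_map]
  congr 1
  apply List.map_congr_left
  intro dd _
  exact (hsym _ _ dd.adj).symm

lemma wlen_nonneg (hnn : ∀ u v : V, G.Adj u v → 0 ≤ ℓ u v)
    {u v : V} (p : G.Walk u v) : 0 ≤ wlen ℓ p := by
  apply List.sum_nonneg
  intro x hx
  obtain ⟨dd, _, rfl⟩ := List.mem_map.mp hx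
  exact hnn _ _ dd.adj

/-- Appending two paths whose supports meet only at the junction gives a path. -/
lemma isPath_append {u v w : V} {p : G.Walk u v} {q : G.Walk v w}
    (hp : p.IsPath) (hq : q.IsPath)
    (h : ∀ a ∈ p.support, a ∈ q.support → a = v) : (p.append q).IsPath := by
  rw [Walk.isPath_def, Walk.support_append]
  apply List.Nodup.append hp.support_nodup
  · exact hq.support_nodup.tail
  · intro a hap haq
    have haq' : a ∈ q.support := by
      rw [q.support_eq_cons]; exact List.mem_cons_of_mem _ haq
    have : a = v := h a hap haq'
    subst this
    have := hq.support_nodup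
    rw [q.support_eq_cons] at this
    exact (List.nodup_cons.mp this).1 haq

/-- The first vertex of a walk that belongs to a list `P` (which contains the walk's
endpoint) splits the walk into a prefix avoiding `P` (except at the split vertex)
and a suffix. -/
lemma walk_meet {a b : V} (s : G.Walk a b) (P : List V) (hb : b ∈ P) :
    ∃ (m : V) (s1 : G.Walk a m) (s2 : G.Walk m b), s1.append s2 = s ∧ m ∈ P ∧
      ∀ v ∈ s1.support, v ∈ P → v = m := by
  induction s with
  | nil =>
    refine ⟨_, Walk.nil, Walk.nil, rfl, hb, ?_⟩
    intro v hv _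
    simpa using hv
  | @cons u v w h t ih =>
    by_cases hu : u ∈ P
    · refine ⟨u, Walk.nil, Walk.cons h t, rfl, hu, ?_⟩
      intro x hx _
      simpa using hx
    · obtain ⟨m, s1, s2, happ, hm, hdisj⟩ := ih hb
      refine ⟨m, Walk.cons h s1, s2, by rw [Walk.cons_append, happ], hm, ?_⟩
      intro x hx hxP
      rw [Walk.support_cons] at hx
      rcases List.mem_cons.mp hx with rfl | hx'
      · exact absurd hxP hu
      · exact hdisj x hx' hxP

end TreeMetricAux

open TreeMetricAux

/-- **Points close to a path point are close.** Let `d` be a tree metric on a finite tree `G`,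
let `y` lie on the unique path from `x` to `z`, and suppose `|d(y',x) − d(y,x)| ≤ ε` and
`|d(y',z) − d(y,z)| ≤ ε`. Then `d(y,y') ≤ ε`. -/
theorem tree_metric_unique_path_point
    {V : Type*} [Fintype V]
    (G : SimpleGraph V) (ℓ d : V → V → ℝ) (hd : IsTreeMetric G ℓ d)
    (ε : ℝ) (hε : 0 ≤ ε)
    (x y z y' : V)
    (hy : ∃ p : G.Walk x z, p.IsPath ∧ y ∈ p.support)
    (h1 : |d y' x - d y x| ≤ ε) (h2 : |d y' z - d y z| ≤ ε) :
    d y y' ≤ ε := by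
  classical
  obtain ⟨htree, hsym, hnn, hdist⟩ := hd
  obtain ⟨p, hp, hyp⟩ := hy
  -- d equals wlen on paths
  have hdw : ∀ (u v : V) (q : G.Walk u v), q.IsPath → d u v = wlen ℓ q := hdist
  -- d is symmetric
  have dsymm : ∀ u v : V, d u v = d v u := by
    intro u v
    obtain ⟨q, hq⟩ := (htree.existsUnique_path u v).exists
    rw [hdw u v q hq, hdw v u q.reverse hq.reverse, wlen_reverse hsym]
  -- the unique path from y' to y
  obtain ⟨s, hs⟩ := (htree.existsUnique_path y' y).exists
  -- meet point m of s with p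
  obtain ⟨m, s1, s2, happ, hmP, hdisj⟩ := walk_meet s p.support hyp
  have hs1 : s1.IsPath := by
    rw [← happ] at hs; exact hs.of_append_left
  have hds1 : d y' m = wlen ℓ s1 := hdw _ _ s1 hs1
  -- m is on p; split p at y
  have hsplit := p.take_spec hyp
  have hm2 : m ∈ (p.takeUntil y hyp).support ∨ m ∈ (p.dropUntil y hyp).support := by
    rw [← Walk.mem_support_append_iff, hsplit]; exact hmP
  -- additivity of d along p at m and at y
  have hdxz : d x z = d x y + d y z := by
    rw [hdw x z p hp, ← hsplit, wlen_append,
      hdw x y _ (hp.takeUntil hyp), hdw y z _ (hp.dropUntil hyp)]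
  have hsplitm := p.take_spec hmP
  have hdxzm : d x z = d x m + d m z := by
    rw [hdw x z p hp, ← hsplitm, wlen_append,
      hdw x m _ (hp.takeUntil hmP), hdw m z _ (hp.dropUntil hmP)]
  rcases hm2 with hmA | hmB
  · -- Case A : m between x and y
    set p1 := p.takeUntil y hyp with hp1def
    have hp1 : p1.IsPath := hp.takeUntil hyp
    have hdxy : d x y = d x m + d m y := by
      rw [hdw x y p1 hp1, ← p1.take_spec hmA, wlen_append,
        hdw x m _ (hp1.takeUntil hmA), hdw m y _ (hp1.dropUntil hmA)]
    -- path from y to y' : reverse of (p1.dropUntil m) then reverse of s1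
    set q1 := p1.dropUntil m hmA with hq1def
    have hq1 : q1.IsPath := hp1.dropUntil hmA
    have hW1 : (q1.reverse.append s1.reverse).IsPath := by
      apply isPath_append hq1.reverse hs1.reverse
      intro a ha ha'
      rw [Walk.support_reverse, List.mem_reverse] at ha ha'
      exact hdisj a ha'
        (p.support_takeUntil_subset hyp (p1.support_dropUntil_subset hmA ha))
    have hdyy' : d y y' = d m y + d y' m := by
      rw [hdw y y' _ hW1, wlen_append, wlen_reverse hsym, wlen_reverse hsym,
        hdw m y q1 hq1, hds1]
    -- path from z to y' : reverse of (p.dropUntil m) then reverse of s1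
    have hW3 : ((p.dropUntil m hmP).reverse.append s1.reverse).IsPath := by
      apply isPath_append (hp.dropUntil hmP).reverse hs1.reverse
      intro a ha ha'
      rw [Walk.support_reverse, List.mem_reverse] at ha ha'
      exact hdisj a ha' (p.support_dropUntil_subset hmP ha)
    have hdzy' : d z y' = d m z + d y' m := by
      rw [hdw z y' _ hW3, wlen_append, wlen_reverse hsym, wlen_reverse hsym,
        hdw m z _ (hp.dropUntil hmP), hds1]
    have hmz : d m z = d m y + d y z := by linarith [hdxz, hdxzm, hdxy]
    have : d y' z - d y z = d y y' := by
      rw [dsymm y' z, hdzy', hmz, hdyy']; ring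
    linarith [(abs_le.mp h2).2, this]
  · -- Case B : m between y and z
    set p2 := p.dropUntil y hyp with hp2def
    have hp2 : p2.IsPath := hp.dropUntil hyp
    have hdyz : d y z = d y m + d m z := by
      rw [hdw y z p2 hp2, ← p2.take_spec hmB, wlen_append,
        hdw y m _ (hp2.takeUntil hmB), hdw m z _ (hp2.dropUntil hmB)]
    set q1 := p2.takeUntil m hmB with hq1def
    have hq1 : q1.IsPath := hp2.takeUntil hmB
    have hW1 : (q1.append s1.reverse).IsPath := by
      apply isPath_append hq1 hs1.reverse
      intro a ha ha'
      rw [Walk.support_reverse, List.mem_reverse] at ha'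
      exact hdisj a ha'
        (p.support_dropUntil_subset hyp (p2.support_takeUntil_subset hmB ha))
    have hdyy' : d y y' = d y m + d y' m := by
      rw [hdw y y' _ hW1, wlen_append, wlen_reverse hsym, hdw y m q1 hq1, hds1]
    -- path from x to y' : p.takeUntil m then reverse of s1
    have hW2 : ((p.takeUntil m hmP).append s1.reverse).IsPath := by
      apply isPath_append (hp.takeUntil hmP) hs1.reverse
      intro a ha ha'
      rw [Walk.support_reverse, List.mem_reverse] at ha'
      exact hdisj a ha' (p.support_takeUntil_subset hmP ha)
    have hdxy' : d x y' = d x m + d y' m := by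
      rw [hdw x y' _ hW2, wlen_append, wlen_reverse hsym,
        hdw x m _ (hp.takeUntil hmP), hds1]
    have hxm : d x m = d x y + d y m := by linarith [hdxz, hdxzm, hdyz]
    have : d y' x - d y x = d y y' := by
      rw [dsymm y' x, dsymm y x, hdxy', hxm, hdyy']; ring
    linarith [(abs_le.mp h1).2, this]
end

section
/- Let T = (V, E) be a finite tree and let μ be a symmetric function on V × V that is multiplicative along T. Let w_1, …, w_t ∈ V be any sequence of vertices with t ≥ 2. If μ(w_i, w_{i+1}) ≠ 0 for every i ∈ [t−1], then μ(w_1, w_t) ≠ 0 and sign(μ(w_1, w_t)) = ∏_{i=1}^{t−1} sign(μ(w_i, w_{i+1})). -/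
open SimpleGraph

private lemma sign_mul' (x y : ℝ) : Real.sign (x * y) = Real.sign x * Real.sign y := by
  rcases lt_trichotomy x 0 with hx | hx | hx <;>
    rcases lt_trichotomy y 0 with hy | hy | hy <;>
    simp [Real.sign_of_pos, Real.sign_of_neg, hx, hy, mul_pos, mul_neg_of_pos_of_neg,
      mul_neg_of_neg_of_pos, mul_pos_of_neg_of_neg, Real.sign_zero]

private lemma sign_sq' {x : ℝ} (hx : x ≠ 0) : Real.sign x * Real.sign x = 1 := by
  rcases hx.lt_or_gt with h | h
  · simp [Real.sign_of_neg h]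
  · simp [Real.sign_of_pos h]

/-- Key step: sign multiplicativity when the middle step is an edge of the tree. -/
private lemma key_edge {V : Type*} {G : SimpleGraph V} (hG : G.IsTree)
    {μ : V → V → ℝ} (hsymm : ∀ u v : V, μ u v = μ v u) (hmult : MultAlong G μ)
    {u v x : V} (hadj : G.Adj v x) (huv : μ u v ≠ 0) (hvx : μ v x ≠ 0) :
    μ u x ≠ 0 ∧ Real.sign (μ u x) = Real.sign (μ u v) * Real.sign (μ v x) := by
  classical
  obtain ⟨W⟩ := hG.isConnected.preconnected u v
  set p : G.Walk u v := W.bypass with hpdef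
  have hp : p.IsPath := W.bypass_isPath
  have hμuv : μ u v = (p.darts.map fun d => μ d.fst d.snd).prod := hmult.2 u v p hp
  by_cases hx : x ∈ p.support
  · -- `x` lies on the path from `u` to `v`; the tail of the path is the single edge `x v`.
    have hdropPath : (p.dropUntil x hx).IsPath := hp.dropUntil hx
    have hsingle : (SimpleGraph.Path.singleton hadj.symm : G.Walk x v).IsPath :=
      (SimpleGraph.Path.singleton hadj.symm).2
    have hEq : p.dropUntil x hx = (SimpleGraph.Path.singleton hadj.symm : G.Walk x v) := by
      have := hG.IsAcyclic.path_unique ⟨p.dropUntil x hx, hdropPath⟩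
        (SimpleGraph.Path.singleton hadj.symm)
      exact congrArg Subtype.val this
    have hdarts : p.darts = (p.takeUntil x hx).darts ++ (p.dropUntil x hx).darts := by
      conv_lhs => rw [← p.take_spec hx]
      rw [SimpleGraph.Walk.darts_append]
    have hμux : μ u x = ((p.takeUntil x hx).darts.map fun d => μ d.fst d.snd).prod :=
      hmult.2 u x _ (hp.takeUntil hx)
    have hdropProd : ((p.dropUntil x hx).darts.map fun d => μ d.fst d.snd).prod = μ x v := by
      rw [hEq]
      simp [SimpleGraph.Path.singleton, SimpleGraph.Walk.darts_cons]
    have hfact : μ u v = μ u x * μ x v := by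
      rw [hμuv, hdarts, List.map_append, List.prod_append, ← hμux, hdropProd]
    have hxv : μ x v ≠ 0 := by rw [← hsymm]; exact hvx
    have hux : μ u x ≠ 0 := by
      intro h
      exact huv (by rw [hfact, h, zero_mul])
    refine ⟨hux, ?_⟩
    have : Real.sign (μ u v) = Real.sign (μ u x) * Real.sign (μ x v) := by
      rw [hfact, sign_mul']
    rw [this, hsymm v x]
    rw [mul_assoc, sign_sq' hxv, mul_one]
  · -- `x` is not on the path; extend it by the edge `v x`.
    have hconcatPath : (p.concat hadj).IsPath := by
      rw [← SimpleGraph.Walk.isPath_reverse_iff, SimpleGraph.Walk.reverse_concat,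
        SimpleGraph.Walk.cons_isPath_iff]
      refine ⟨hp.reverse, ?_⟩
      rw [SimpleGraph.Walk.support_reverse, List.mem_reverse]
      exact hx
    have hμux : μ u x = ((p.concat hadj).darts.map fun d => μ d.fst d.snd).prod :=
      hmult.2 u x _ hconcatPath
    have hfact : μ u x = μ u v * μ v x := by
      rw [hμux, SimpleGraph.Walk.darts_concat, List.concat_eq_append, List.map_append,
        List.prod_append, ← hμuv]
      simp
    refine ⟨by rw [hfact]; exact mul_ne_zero huv hvx, by rw [hfact, sign_mul']⟩

/-- Propagation along a walk with nonzero edge values. -/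
private lemma key_walk {V : Type*} {G : SimpleGraph V} (hG : G.IsTree)
    {μ : V → V → ℝ} (hsymm : ∀ u v : V, μ u v = μ v u) (hmult : MultAlong G μ)
    {v x : V} (q : G.Walk v x)
    (hq : ∀ d ∈ q.darts, μ d.fst d.snd ≠ 0) :
    ∀ u : V, μ u v ≠ 0 →
      μ u x ≠ 0 ∧ Real.sign (μ u x) =
        Real.sign (μ u v) * (q.darts.map fun d => Real.sign (μ d.fst d.snd)).prod := by
  induction q with
  | nil => intro u hu; exact ⟨hu, by simp⟩
  | @cons v y x h q' ih =>
    intro u hu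
    have hvy : μ v y ≠ 0 := hq ⟨(v, y), h⟩ (by simp [SimpleGraph.Walk.darts_cons])
    obtain ⟨huy, hsuy⟩ := key_edge hG hsymm hmult h hu hvy
    have hq' : ∀ d ∈ q'.darts, μ d.fst d.snd ≠ 0 := fun d hd =>
      hq d (by simp [SimpleGraph.Walk.darts_cons, hd])
    obtain ⟨hux, hsux⟩ := ih hq' u huy
    refine ⟨hux, ?_⟩
    rw [hsux, hsuy]
    simp [SimpleGraph.Walk.darts_cons, mul_assoc]

/-- Sign multiplicativity for an arbitrary middle vertex. -/
private lemma key_step {V : Type*} {G : SimpleGraph V} (hG : G.IsTree)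
    {μ : V → V → ℝ} (hsymm : ∀ u v : V, μ u v = μ v u) (hmult : MultAlong G μ)
    {u v x : V} (huv : μ u v ≠ 0) (hvx : μ v x ≠ 0) :
    μ u x ≠ 0 ∧ Real.sign (μ u x) = Real.sign (μ u v) * Real.sign (μ v x) := by
  classical
  obtain ⟨W⟩ := hG.isConnected.preconnected v x
  set q : G.Walk v x := W.bypass with hqdef
  have hqp : q.IsPath := W.bypass_isPath
  have hμvx : μ v x = (q.darts.map fun d => μ d.fst d.snd).prod := hmult.2 v x q hqp
  have hq : ∀ d ∈ q.darts, μ d.fst d.snd ≠ 0 := by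
    intro d hd hd0
    apply hvx
    rw [hμvx]
    exact List.prod_eq_zero (by simpa using ⟨d, hd, hd0⟩)
  obtain ⟨hux, hsux⟩ := key_walk hG hsymm hmult q hq u huv
  refine ⟨hux, ?_⟩
  have hsign : Real.sign (μ v x) = (q.darts.map fun d => Real.sign (μ d.fst d.snd)).prod := by
    rw [hμvx]
    induction q.darts with
    | nil => simp
    | cons d l ihl => simp [sign_mul', ihl]
  rw [hsux, hsign]

/-- **Signs multiply along sequences of vertices in a tree model.** Let `μ` be symmetric and
multiplicative along a finite tree `G`, and let `w_1, …, w_t` (here `w 0, …, w (t-1)`) be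
vertices with `μ(w_i, w_{i+1}) ≠ 0` for all consecutive pairs. Then `μ(w_1, w_t) ≠ 0` and
`sign(μ(w_1, w_t)) = ∏ sign(μ(w_i, w_{i+1}))`. -/
theorem signs_multiply
    {V : Type*} [Fintype V]
    (G : SimpleGraph V) (hG : G.IsTree)
    (μ : V → V → ℝ) (hsymm : ∀ u v : V, μ u v = μ v u) (hmult : MultAlong G μ)
    (t : ℕ) (ht : 2 ≤ t) (w : ℕ → V)
    (hnz : ∀ i < t - 1, μ (w i) (w (i + 1)) ≠ 0) :
    μ (w 0) (w (t - 1)) ≠ 0 ∧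
    Real.sign (μ (w 0) (w (t - 1))) =
      ∏ i ∈ Finset.range (t - 1), Real.sign (μ (w i) (w (i + 1))) := by
  suffices H : ∀ n : ℕ, (∀ i < n, μ (w i) (w (i + 1)) ≠ 0) →
      μ (w 0) (w n) ≠ 0 ∧
      Real.sign (μ (w 0) (w n)) =
        ∏ i ∈ Finset.range n, Real.sign (μ (w i) (w (i + 1))) from H (t - 1) hnz
  intro n
  induction n with
  | zero =>
    intro _
    rw [hmult.1 (w 0)]
    simp
  | succ n ihn =>
    intro hnz'
    have h1 : ∀ i < n, μ (w i) (w (i + 1)) ≠ 0 := fun i hi =>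
      hnz' i (Nat.lt_succ_of_lt hi)
    obtain ⟨h0n, hsn⟩ := ihn h1
    have hn1 : μ (w n) (w (n + 1)) ≠ 0 := hnz' n (Nat.lt_succ_self n)
    obtain ⟨h0, hs⟩ := key_step hG hsymm hmult h0n hn1
    refine ⟨h0, ?_⟩
    rw [hs, hsn, Finset.prod_range_succ]
end

section
/- Let V be a finite set, let α, β ∈ (0, 1), and let T = (V, E_T) and T' = (V, E_{T'}) be two trees on V. Let μ be a symmetric function multiplicative along T with α ≤ |μ(u, v)| ≤ 1 − β for every edge {u, v} ∈ E_T, and let μ' be a symmetric function multiplicative along T' with |μ'(u, v)| ≤ 1 for all u, v ∈ V. If |μ(u, v) − μ'(u, v)| < αβ/4 for all u, v ∈ V, then E_T = E_{T'}, i.e., the two trees are identical. (In particular, if P is a tree Ising model on T with edge correlations of absolute value in [α, 1−β], then any tree Ising model P' on T' with locTV^{(3)}(P, P') < αβ/8 satisfies T = T'.) -/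
open SimpleGraph

/-- The absolute value of the dart-product along any walk is at most `(1-β)^length`. -/
lemma abs_dart_prod_le {V : Type*} {G : SimpleGraph V} {μ : V → V → ℝ} {β : ℝ}
    (hbd : ∀ u v : V, G.Adj u v → |μ u v| ≤ 1 - β) :
    ∀ {x y : V} (p : G.Walk x y),
      |(p.darts.map fun d => μ d.fst d.snd).prod| ≤ (1 - β) ^ p.length := by
  intro x y p
  induction p with
  | nil => simp
  | cons h q ih =>
    simp only [Walk.darts_cons, List.map_cons, List.prod_cons, Walk.length_cons, abs_mul]
    calc |μ _ _| * |(q.darts.map fun d => μ d.fst d.snd).prod|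
        ≤ (1 - β) * (1 - β) ^ q.length := by
          apply mul_le_mul (hbd _ _ h) ih (abs_nonneg _)
          exact le_trans (abs_nonneg _) (hbd _ _ h)
      _ = (1 - β) ^ (q.length + 1) := by ring

/-- **Accuracy of correlations implies structure recovery.** Let `T` and `T'` be trees on a
finite vertex set `V`. Let `μ` be symmetric and multiplicative along `T` with
`α ≤ |μ(u,v)| ≤ 1 − β` on the edges of `T`, and let `μ'` be symmetric and multiplicative along
`T'` with `|μ'| ≤ 1` everywhere. If `|μ(u,v) − μ'(u,v)| < αβ/4` for all `u, v`, then the two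
trees coincide. -/
theorem structure_recovery_from_correlations
    {V : Type*} [Fintype V]
    (α β : ℝ) (hα : α ∈ Set.Ioo (0 : ℝ) 1) (hβ : β ∈ Set.Ioo (0 : ℝ) 1)
    (T T' : SimpleGraph V) (hT : T.IsTree) (hT' : T'.IsTree)
    (μ : V → V → ℝ) (hμsymm : ∀ u v : V, μ u v = μ v u) (hμmult : MultAlong T μ)
    (hμbd : ∀ u v : V, T.Adj u v → α ≤ |μ u v| ∧ |μ u v| ≤ 1 - β)
    (μ' : V → V → ℝ) (hμ'symm : ∀ u v : V, μ' u v = μ' v u) (hμ'mult : MultAlong T' μ')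
    (hμ'bd : ∀ u v : V, |μ' u v| ≤ 1)
    (hclose : ∀ u v : V, |μ u v - μ' u v| < α * β / 4) :
    T = T' := by
  classical
  have hβ1 : (0:ℝ) ≤ 1 - β := by linarith [hβ.2]
  -- general bound: for x ≠ y, |μ x y| ≤ 1 - β
  have hgen : ∀ x y : V, x ≠ y → |μ x y| ≤ 1 - β := by
    intro x y hxy
    obtain ⟨q⟩ := hT.isConnected.preconnected x y
    have hq : q.bypass.IsPath := q.bypass_isPath
    have hmul := hμmult.2 x y q.bypass hq
    have hlen : 1 ≤ q.bypass.length := by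
      rcases Nat.eq_zero_or_pos q.bypass.length with h0 | h1
      · exact absurd (Walk.eq_of_length_eq_zero h0) hxy
      · exact h1
    calc |μ x y| = |(q.bypass.darts.map fun d => μ d.fst d.snd).prod| := by rw [hmul]
      _ ≤ (1 - β) ^ q.bypass.length :=
          abs_dart_prod_le (fun u v h => (hμbd u v h).2) q.bypass
      _ ≤ (1 - β) ^ 1 := pow_le_pow_of_le_one hβ1 (by linarith [hβ.1]) hlen
      _ = 1 - β := pow_one _
  -- key step: every edge of T is an edge of T'
  have hsub : T ≤ T' := by
    intro u v huv
    by_contra hne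
    have huvne : u ≠ v := huv.ne
    set ε := α * β / 4 with hε
    set c := |μ u v| with hc
    have hcα : α ≤ c := (hμbd u v huv).1
    -- factorization: there is w with T'.Adj u w, μ' u v = μ' u w * μ' w v, w ≠ u, w ≠ v
    obtain ⟨p⟩ := hT'.isConnected.preconnected u v
    have hp : p.bypass.IsPath := p.bypass_isPath
    have hmul' := hμ'mult.2 u v p.bypass hp
    obtain ⟨w, hadj, q, hq, hqpath, hwu, hwv⟩ :
        ∃ (w : V) (_ : T'.Adj u w) (q : T'.Walk w v),
          μ' u v = μ' u w * (q.darts.map fun d => μ' d.fst d.snd).prod ∧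
          q.IsPath ∧ w ≠ u ∧ w ≠ v := by
      cases hpb : p.bypass with
      | nil => exact absurd rfl huvne
      | cons h q =>
        rw [hpb] at hmul' hp
        refine ⟨_, h, q, ?_, hp.of_cons, fun he => (he ▸ h).ne' rfl, fun he => hne (he ▸ h)⟩
        simpa [Walk.darts_cons] using hmul'
    have hqv : μ' w v = (q.darts.map fun d => μ' d.fst d.snd).prod := hμ'mult.2 w v q hqpath
    have hfac : μ' u v = μ' u w * μ' w v := by rw [hqv]; exact hq
    -- one of |μ u w|, |μ w v| is ≤ (1-β) * c
    have hkey : |μ u w| ≤ (1 - β) * c ∨ |μ w v| ≤ (1 - β) * c := by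
      obtain ⟨r⟩ := hT.isConnected.preconnected v w
      have hr : r.bypass.IsPath := r.bypass_isPath
      by_cases hmem : u ∈ r.bypass.support
      · -- μ v w = μ v u * μ u w
        right
        have h1 : μ v u = ((r.bypass.takeUntil u hmem).darts.map fun d => μ d.fst d.snd).prod :=
          hμmult.2 v u _ (hr.takeUntil hmem)
        have h2 : μ u w = ((r.bypass.dropUntil u hmem).darts.map fun d => μ d.fst d.snd).prod :=
          hμmult.2 u w _ (hr.dropUntil hmem)
        have h3 : μ v w = μ v u * μ u w := by
          rw [hμmult.2 v w r.bypass hr, ← Walk.take_spec r.bypass hmem, Walk.darts_append,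
            List.map_append, List.prod_append, h1, h2]
        have h4 : |μ u w| ≤ 1 - β := hgen u w (Ne.symm hwu)
        calc |μ w v| = |μ v u| * |μ u w| := by rw [hμsymm w v, h3, abs_mul]
          _ = c * |μ u w| := by rw [hμsymm v u, ← hc]
          _ ≤ c * (1 - β) := by
              apply mul_le_mul_of_nonneg_left h4 (abs_nonneg _)
          _ = (1 - β) * c := mul_comm _ _
      · -- μ u w = μ u v * μ v w
        left
        have hpath : (Walk.cons huv r.bypass).IsPath := hr.cons hmem
        have h3 : μ u w = μ u v * μ v w := by
          rw [hμmult.2 u w _ hpath]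
          simp only [Walk.darts_cons, List.map_cons, List.prod_cons]
          rw [← hμmult.2 v w r.bypass hr]
        have h4 : |μ v w| ≤ 1 - β := hgen v w (Ne.symm hwv)
        calc |μ u w| = |μ u v| * |μ v w| := by rw [h3, abs_mul]
          _ ≤ c * (1 - β) := mul_le_mul_of_nonneg_left h4 (abs_nonneg _)
          _ = (1 - β) * c := mul_comm _ _
    -- conclude the contradiction
    have hlow : c - ε < |μ' u v| := by
      have := hclose u v
      have h1 : |μ u v| - |μ' u v| ≤ |μ u v - μ' u v| := abs_sub_abs_le_abs_sub _ _
      rw [← hc] at h1; linarith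
    have hup : |μ' u v| ≤ (1 - β) * c + ε := by
      rw [hfac, abs_mul]
      rcases hkey with hk | hk
      · have h1 : |μ' u w| ≤ |μ u w| + ε := by
          have := hclose u w
          have h2 : |μ' u w| - |μ u w| ≤ |μ u w - μ' u w| := by
            rw [abs_sub_comm]; exact abs_sub_abs_le_abs_sub _ _
          linarith
        calc |μ' u w| * |μ' w v| ≤ |μ' u w| * 1 :=
              mul_le_mul_of_nonneg_left (hμ'bd w v) (abs_nonneg _)
          _ = |μ' u w| := mul_one _
          _ ≤ |μ u w| + ε := h1
          _ ≤ (1 - β) * c + ε := by linarith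
      · have h1 : |μ' w v| ≤ |μ w v| + ε := by
          have := hclose w v
          have h2 : |μ' w v| - |μ w v| ≤ |μ w v - μ' w v| := by
            rw [abs_sub_comm]; exact abs_sub_abs_le_abs_sub _ _
          linarith
        calc |μ' u w| * |μ' w v| ≤ 1 * |μ' w v| :=
              mul_le_mul_of_nonneg_right (hμ'bd u w) (abs_nonneg _)
          _ = |μ' w v| := one_mul _
          _ ≤ |μ w v| + ε := h1
          _ ≤ (1 - β) * c + ε := by linarith
    -- from c - ε < (1-β) c + ε : β c < 2 ε = α β / 2, but c ≥ α > 0, β > 0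
    have : β * c < α * β / 2 := by rw [hε] at hlow hup; linarith
    have hαβ : 0 < α * β := mul_pos hα.1 hβ.1
    nlinarith [mul_le_mul_of_nonneg_left hcα (le_of_lt hβ.1)]
  -- both trees, same vertex count ⇒ same edge count ⇒ equal
  have h1 := hT.card_edgeFinset
  have h2 := hT'.card_edgeFinset
  have hcard : T'.edgeFinset.card ≤ T.edgeFinset.card := by omega
  have := Finset.eq_of_subset_of_card_le (edgeFinset_mono hsub) hcard
  exact edgeFinset_inj.mp this
end

section
/- Let T be a finite tree on vertex set V with nonnegative edge lengths, each at most L > 0, and let d be the associated tree metric. Let ε ≥ 0 and let d̃_pre : V × V → [0, ∞] be a symmetric function such that d(u, v) ≤ d̃_pre(u, v) for all u, v ∈ V, and d̃_pre(u, v) ≤ d(u, v) + ε for all u, v ∈ V with d(u, v) ≤ 3L. Define the shortest path metric d̃(u, v) = the minimum over all finite sequences u = w_0, w_1, …, w_k = v of vertices of ∑_{i=1}^{k} d̃_pre(w_{i−1}, w_i). Then for all u, v ∈ V: d(u, v) ≤ d̃(u, v) ≤ d(u, v) + (d(u, v)/L + 1)·ε. -/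
open SimpleGraph ENNReal

/-- The shortest path metric associated to a (possibly infinite-valued) distance estimate
`dpre`: the infimum over all finite sequences of vertices joining `u` to `v` of the total
`dpre`-length of the sequence. -/
noncomputable def spMetric {V : Type*} (dpre : V → V → ℝ≥0∞) (u v : V) : ℝ≥0∞ :=
  ⨅ (k : ℕ) (w : ℕ → V) (_ : w 0 = u) (_ : w k = v),
    ∑ i ∈ Finset.range k, dpre (w i) (w (i + 1))

/-! The lower bound holds because `d` satisfies the triangle inequality, and `spMetric dpre` is
the largest function below `dpre` that does. For the upper bound, walk along the tree path
from `u` to `v` and cut it greedily into hops of `d`-length in `(L, 2L]` (possible since every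
edge has length at most `L`), plus a last hop of length at most `2L`. Each hop costs at most
its length plus `ε`, and there are at most `d(u, v)/L + 1` hops. -/

namespace SimpleGraph.Walk

variable {V : Type*} {G : SimpleGraph V} {u v w : V}

def weight (ℓ : V → V → ℝ) (p : G.Walk u v) : ℝ :=
  (p.darts.map fun e => ℓ e.fst e.snd).sum

variable {ℓ : V → V → ℝ}

lemma weight_append (p : G.Walk u v) (q : G.Walk v w) :
    (p.append q).weight ℓ = p.weight ℓ + q.weight ℓ := by
  simp [weight, darts_append]

lemma weight_bypass_le [DecidableEq V] (hℓ : ∀ a b, G.Adj a b → 0 ≤ ℓ a b)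
    (p : G.Walk u v) : p.bypass.weight ℓ ≤ p.weight ℓ :=
  (p.darts_bypass_sublist_darts.map _).sum_le_sum fun _ he => by
    obtain ⟨e, -, rfl⟩ := List.mem_map.mp he
    exact hℓ _ _ e.adj

end SimpleGraph.Walk

section spMetric

variable {V : Type*} {dpre : V → V → ℝ≥0∞}

lemma spMetric_le (u v : V) : spMetric dpre u v ≤ dpre u v := by
  refine iInf_le_of_le 1 <| iInf_le_of_le (fun i => if i = 0 then u else v) <|
    iInf_le_of_le rfl <| iInf_le_of_le rfl ?_
  simp

lemma spMetric_le_add (u x v : V) : spMetric dpre u v ≤ dpre u x + spMetric dpre x v := by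
  simp only [spMetric, ENNReal.add_iInf]
  refine le_iInf fun k => le_iInf fun w => le_iInf fun h0 => le_iInf fun hk => ?_
  refine iInf_le_of_le (k + 1) <| iInf_le_of_le (fun i => if i = 0 then u else w (i - 1)) <|
    iInf_le_of_le rfl <| iInf_le_of_le (by simp [hk]) ?_
  simp [Finset.sum_range_succ' _ k, h0, add_comm]

lemma le_spMetric {f : V → V → ℝ≥0∞} (hself : ∀ a, f a a = 0)
    (htri : ∀ a b c, f a c ≤ f a b + f b c) (hf : ∀ a b, f a b ≤ dpre a b) (u v : V) :
    f u v ≤ spMetric dpre u v := by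
  refine le_iInf fun k => le_iInf fun w => le_iInf fun h0 => le_iInf fun hk => ?_
  subst h0 hk
  induction k with
  | zero => simp [hself]
  | succ k ih =>
    rw [Finset.sum_range_succ]
    exact (htri _ (w k) _).trans (add_le_add ih (hf _ _))

end spMetric

namespace IsTreeMetric

variable {V : Type*} {G : SimpleGraph V} {ℓ d : V → V → ℝ} (hd : IsTreeMetric G ℓ d)
include hd

lemma dist_eq_weight {u v : V} {p : G.Walk u v} (hp : p.IsPath) : d u v = p.weight ℓ :=
  hd.2.2.2 u v p hp

lemma dist_le_weight {u v : V} (p : G.Walk u v) : d u v ≤ p.weight ℓ := by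
  classical
  exact (hd.dist_eq_weight p.bypass_isPath).trans_le (p.weight_bypass_le hd.2.2.1)

lemma dist_self (u : V) : d u u = 0 :=
  hd.dist_eq_weight (Walk.IsPath.nil (u := u))

lemma dist_of_adj {u v : V} (h : G.Adj u v) : d u v = ℓ u v := by
  have hp : (Walk.cons h Walk.nil : G.Walk u v).IsPath := by simp [h.ne]
  simp [hd.dist_eq_weight hp, Walk.weight]

lemma dist_nonneg (u v : V) : 0 ≤ d u v := by
  obtain ⟨p, hp, -⟩ := hd.1.existsUnique_path u v
  rw [hd.dist_eq_weight hp]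
  exact List.sum_nonneg fun _ he => by
    obtain ⟨e, -, rfl⟩ := List.mem_map.mp he
    exact hd.2.2.1 _ _ e.adj

lemma dist_triangle (u v w : V) : d u w ≤ d u v + d v w := by
  obtain ⟨p, hp, -⟩ := hd.1.existsUnique_path u v
  obtain ⟨q, hq, -⟩ := hd.1.existsUnique_path v w
  calc d u w ≤ (p.append q).weight ℓ := hd.dist_le_weight _
    _ = d u v + d v w := by
      rw [Walk.weight_append, hd.dist_eq_weight hp, hd.dist_eq_weight hq]

lemma dist_eq_add_of_isPath_append {u v w : V} {p : G.Walk u v} {q : G.Walk v w}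
    (hpq : (p.append q).IsPath) : d u w = d u v + d v w := by
  rw [hd.dist_eq_weight hpq, Walk.weight_append, hd.dist_eq_weight hpq.of_append_left,
    hd.dist_eq_weight hpq.of_append_right]

lemma ofReal_dist_le_spMetric {dpre : V → V → ℝ≥0∞}
    (hlow : ∀ u v, ENNReal.ofReal (d u v) ≤ dpre u v) (u v : V) :
    ENNReal.ofReal (d u v) ≤ spMetric dpre u v :=
  le_spMetric (by simp [hd.dist_self])
    (fun a b c => (ofReal_le_ofReal (hd.dist_triangle a b c)).trans ofReal_add_le) hlow u v

variable {L ε : ℝ} (hL : 0 < L) (hedge : ∀ u v, G.Adj u v → ℓ u v ≤ L) (hε : 0 ≤ ε)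
  {dpre : V → V → ℝ≥0∞}
  (hupp : ∀ u v, d u v ≤ 2 * L → dpre u v ≤ ENNReal.ofReal (d u v + ε))
include hL hedge hε hupp

/-- Induction along `q`: the current hop starts at `x`, has so far covered `p`, and has length at
most `2L`. -/
lemma spMetric_le_of_isPath_append {a v : V} (q : G.Walk a v) {x : V} (p : G.Walk x a)
    (hpq : (p.append q).IsPath) (hxa : d x a ≤ 2 * L) :
    spMetric dpre x v ≤ ENNReal.ofReal (d x v + (d x v / L + 1) * ε) := by
  induction q generalizing x with
  | @nil a =>
    have : 0 ≤ d x a / L * ε := by have := hd.dist_nonneg x a; positivity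
    calc spMetric dpre x a ≤ dpre x a := spMetric_le x a
      _ ≤ ENNReal.ofReal (d x a + ε) := hupp x a hxa
      _ ≤ _ := ofReal_le_ofReal (by linarith)
  | @cons a b v h q ih =>
    have hpath : ((p.append (Walk.cons h Walk.nil)).append q).IsPath := by
      rwa [← Walk.concat_eq_append, Walk.concat_append]
    have hxb : d x b = d x a + ℓ a b := by
      rw [hd.dist_eq_add_of_isPath_append hpath.of_append_left, hd.dist_of_adj h]
    have hxv : d x v = d x a + d a v := hd.dist_eq_add_of_isPath_append hpq
    by_cases hshort : d x a + ℓ a b ≤ 2 * L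
    · exact ih (p.concat h) (by rwa [Walk.concat_eq_append]) (hxb ▸ hshort)
    · have hlong : L < d x a := by linarith [hedge a b h]
      have hav := ih (Walk.cons h Walk.nil) hpq.of_append_right (by
        rw [hd.dist_of_adj h]; linarith [hedge a b h])
      have hdxa := hd.dist_nonneg x a
      have hdav := hd.dist_nonneg a v
      have : 0 ≤ d a v / L * ε := by positivity
      have hε_le : ε ≤ d x a / L * ε :=
        le_mul_of_one_le_left hε ((one_le_div hL).mpr hlong.le)
      calc spMetric dpre x v ≤ dpre x a + spMetric dpre a v := spMetric_le_add x a v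
        _ ≤ ENNReal.ofReal (d x a + ε) + ENNReal.ofReal (d a v + (d a v / L + 1) * ε) :=
          add_le_add (hupp x a hxa) hav
        _ = ENNReal.ofReal (d x a + ε + (d a v + (d a v / L + 1) * ε)) :=
          (ofReal_add (by linarith) (by linarith)).symm
        _ ≤ _ := ofReal_le_ofReal (by rw [hxv, add_div]; linarith)

end IsTreeMetric

theorem shortest_path_metric_approximates_general
    {V : Type*}
    (G : SimpleGraph V) (ℓ d : V → V → ℝ) (hd : IsTreeMetric G ℓ d)
    (L : ℝ) (hL : 0 < L) (hedge : ∀ u v : V, G.Adj u v → ℓ u v ≤ L)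
    (ε : ℝ) (hε : 0 ≤ ε)
    (dpre : V → V → ℝ≥0∞)
    (hlow : ∀ u v : V, ENNReal.ofReal (d u v) ≤ dpre u v)
    (hupp : ∀ u v : V, d u v ≤ 3 * L → dpre u v ≤ ENNReal.ofReal (d u v + ε)) :
    ∀ u v : V,
      ENNReal.ofReal (d u v) ≤ spMetric dpre u v ∧
      spMetric dpre u v ≤ ENNReal.ofReal (d u v + (d u v / L + 1) * ε) := by
  intro u v
  obtain ⟨p, hp, -⟩ := hd.1.existsUnique_path u v
  have hupp' : ∀ a b, d a b ≤ 2 * L → dpre a b ≤ ENNReal.ofReal (d a b + ε) :=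
    fun a b h => hupp a b (by linarith)
  refine ⟨hd.ofReal_dist_le_spMetric hlow u v, ?_⟩
  exact hd.spMetric_le_of_isPath_append hL hedge hε hupp' p Walk.nil (by simpa using hp)
    (by rw [hd.dist_self]; positivity)

/-- **The shortest path metric of upper confidence bounds approximates the tree metric.** Let
`d` be a tree metric on a finite tree with edge lengths at most `L`, and let `d̃_pre` be a
symmetric estimate with `d ≤ d̃_pre` everywhere and `d̃_pre(u,v) ≤ d(u,v) + ε` whenever
`d(u,v) ≤ 3L`. Then the shortest path metric `d̃` of `d̃_pre` satisfies
`d(u,v) ≤ d̃(u,v) ≤ d(u,v) + (d(u,v)/L + 1)·ε` for all `u, v`. -/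
theorem shortest_path_metric_approximates
    {V : Type*} [Fintype V]
    (G : SimpleGraph V) (ℓ d : V → V → ℝ) (hd : IsTreeMetric G ℓ d)
    (L : ℝ) (hL : 0 < L) (hedge : ∀ u v : V, G.Adj u v → ℓ u v ≤ L)
    (ε : ℝ) (hε : 0 ≤ ε)
    (dpre : V → V → ℝ≥0∞)
    (hsymm : ∀ u v : V, dpre u v = dpre v u)
    (hlow : ∀ u v : V, ENNReal.ofReal (d u v) ≤ dpre u v)
    (hupp : ∀ u v : V, d u v ≤ 3 * L → dpre u v ≤ ENNReal.ofReal (d u v + ε)) :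
    ∀ u v : V,
      ENNReal.ofReal (d u v) ≤ spMetric dpre u v ∧
      spMetric dpre u v ≤ ENNReal.ofReal (d u v + (d u v / L + 1) * ε) :=
  shortest_path_metric_approximates_general G ℓ d hd L hL hedge ε hε dpre hlow hupp
end

section
/- There is an absolute constant (namely 30) such that the following holds. Let L ≥ 2ε ≥ 0. Let T̂ be a finite tree on vertex set X with nonnegative edge lengths and associated tree metric d̂, and let V ⊆ X be nonempty; suppose every vertex in X ∖ V has degree at least 3 in T̂. Let T be a finite tree on vertex set V with nonnegative edge lengths, each at most L, and associated tree metric d, and suppose |d(u, v) − d̂(u, v)| ≤ (d(u, v)/L + 1)·ε for all u, v ∈ V. Then every vertex x ∈ X has some v ∈ V with d̂(x, v) ≤ 30ε. -/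
/-!
Let `x` be a Steiner node. Its at least three branches in `T̂` each end in a leaf, which lies in
`V`. A path of `T` between two branches has an edge `z₁z₂` crossing between them; since `x` lies
between `z₁` and `z₂` in `T̂` and `d(z₁, z₂) ≤ L`, both are within `L + 2ε` of `x`. In the same way a
third branch contains a point `m` within `L + 2ε` of `x`. In `T` one of `z₁, z₂`, say `b`, lies on
the path from `m` to the other one, `f`, so `d(m,b) + d(b,f) - d(m,f) = 0`, whereas in `T̂`, where `x`
separates `m`, `b`, `f` pairwise, the same expression equals `2 d̂(x,b)`. The distances involved are
`O(L)`, so the approximation errors are `O(ε)`, and `d̂(x,b) ≤ 11ε`.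
-/

open SimpleGraph

namespace SimpleGraph

variable {α : Type*} {G : SimpleGraph α}

lemma Connected.exists_adj_mem_notMem (hG : G.Connected) (S : Set α) {s t : α} (hs : s ∈ S)
    (ht : t ∉ S) : ∃ u v, G.Adj u v ∧ u ∈ S ∧ v ∉ S := by
  obtain ⟨p⟩ := hG.preconnected s t
  obtain ⟨dd, -, hu, hv⟩ := p.exists_boundary_dart S hs ht
  exact ⟨dd.fst, dd.snd, dd.adj, hu, hv⟩

lemma IsTree.length_eq_dist (hG : G.IsTree) {u v : α} {p : G.Walk u v} (hp : p.IsPath) :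
    p.length = G.dist u v := by
  obtain ⟨q, hq, hlen⟩ := (hG.connected u v).exists_path_of_dist
  rw [← hlen, (hG.existsUnique_path u v).unique hp hq]

/-- `u` and `v` lie in the same branch of `G` at `x`, i.e. in the same component of `G - x`. -/
def SameBranch (G : SimpleGraph α) (x u v : α) : Prop :=
  ∃ p : G.Walk u v, x ∉ p.support

namespace SameBranch

variable {x u v w : α}

lemma ne_left (h : G.SameBranch x u v) : u ≠ x := by
  obtain ⟨p, hp⟩ := h
  rintro rfl
  exact hp p.start_mem_support

lemma refl (hu : u ≠ x) : G.SameBranch x u u :=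
  ⟨Walk.nil, by simpa using hu.symm⟩

lemma symm (h : G.SameBranch x u v) : G.SameBranch x v u := by
  obtain ⟨p, hp⟩ := h
  exact ⟨p.reverse, by simpa using hp⟩

lemma trans (h₁ : G.SameBranch x u v) (h₂ : G.SameBranch x v w) : G.SameBranch x u w := by
  obtain ⟨p, hp⟩ := h₁
  obtain ⟨q, hq⟩ := h₂
  exact ⟨p.append q, by simp [Walk.mem_support_append_iff, hp, hq]⟩

lemma of_adj (h : G.Adj u v) (hu : u ≠ x) (hv : v ≠ x) : G.SameBranch x u v :=
  ⟨Walk.cons h Walk.nil, by simp [hu.symm, hv.symm]⟩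

end SameBranch

lemma IsTree.not_sameBranch (hG : G.IsTree) {x y₁ y₂ u v : α} (h₁ : G.Adj x y₁)
    (h₂ : G.Adj x y₂) (hne : y₁ ≠ y₂) (hu : G.SameBranch x u y₁) (hv : G.SameBranch x v y₂) :
    ¬G.SameBranch x u v := by
  classical
  intro huv
  obtain ⟨p, hp⟩ := (hu.symm.trans huv).trans hv
  have hpath : (Walk.cons h₁ p.bypass).IsPath :=
    (Walk.cons_isPath_iff _ _).2 ⟨p.bypass_isPath, fun h => hp (p.support_bypass_subset_support h)⟩
  have := hG.isAcyclic.eq_snd_of_adj_start hpath h₂ (Walk.end_mem_support _)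
  exact hne (by simpa using this.symm)

/-- A vertex of the branch farthest from `x` is a leaf. -/
lemma IsTree.exists_sameBranch_ncard_neighborSet_le_one [Finite α] (hG : G.IsTree) {x y : α}
    (hxy : G.Adj x y) : ∃ z, G.SameBranch x z y ∧ (G.neighborSet z).ncard ≤ 1 := by
  obtain ⟨z, hz, hmax⟩ := Set.exists_max_image {z | G.SameBranch x z y} (G.dist x)
    (Set.toFinite _) ⟨y, SameBranch.refl hxy.ne'⟩
  obtain ⟨p, hp, hlen⟩ := (hG.connected x z).exists_path_of_dist
  have hsub : G.neighborSet z ⊆ {p.penultimate} := by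
    intro w hw
    have hwp : w ∈ p.support := by
      by_contra hwp
      have hwx : w ≠ x := by
        rintro rfl
        exact hwp p.start_mem_support
      have hw' : G.Adj z w := hw
      have := hmax w ((SameBranch.of_adj hw'.symm hwx hz.ne_left).trans hz)
      rw [← hG.length_eq_dist (hp.concat hwp hw'), Walk.length_concat, hlen] at this
      omega
    exact hG.isAcyclic.eq_penultimate_of_adj_end hp hw hwp
  exact ⟨z, hz, (Set.ncard_le_ncard hsub).trans (Set.ncard_singleton _).le⟩

end SimpleGraph

namespace IsTreeMetric

variable {α : Type*} {G : SimpleGraph α} {ℓ d : α → α → ℝ}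

lemma nonneg (h : IsTreeMetric G ℓ d) (u v : α) : 0 ≤ d u v := by
  obtain ⟨p, hp⟩ := h.1.connected.preconnected.exists_isPath u v
  rw [h.2.2.2 u v p hp]
  refine List.sum_nonneg fun r hr => ?_
  obtain ⟨dd, -, rfl⟩ := List.mem_map.1 hr
  exact h.2.2.1 _ _ dd.adj

lemma self_eq_zero (h : IsTreeMetric G ℓ d) (u : α) : d u u = 0 := by
  simpa using h.2.2.2 u u Walk.nil Walk.IsPath.nil

lemma symm (h : IsTreeMetric G ℓ d) (u v : α) : d u v = d v u := by
  obtain ⟨p, hp⟩ := h.1.connected.preconnected.exists_isPath u v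
  rw [h.2.2.2 u v p hp, h.2.2.2 v u p.reverse hp.reverse]
  simp only [Walk.darts_reverse, List.map_reverse, List.sum_reverse, List.map_map]
  exact congrArg List.sum (List.map_congr_left fun dd _ => h.2.1 _ _ dd.adj)

lemma add_eq_of_mem_support (h : IsTreeMetric G ℓ d) {u v w : α} {p : G.Walk u v}
    (hp : p.IsPath) (hw : w ∈ p.support) : d u w + d w v = d u v := by
  classical
  rw [h.2.2.2 _ _ _ (hp.takeUntil hw), h.2.2.2 _ _ _ (hp.dropUntil hw), h.2.2.2 _ _ _ hp]
  rw [← List.sum_append, ← List.map_append, ← Walk.darts_append, p.take_spec hw]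

lemma eq_of_adj (h : IsTreeMetric G ℓ d) {u v : α} (huv : G.Adj u v) : d u v = ℓ u v := by
  simpa using h.2.2.2 u v _ (Path.singleton huv).2

lemma add_eq_or_add_eq_of_adj (h : IsTreeMetric G ℓ d) {u v : α} (huv : G.Adj u v) (w : α) :
    d w u + d u v = d w v ∨ d w v + d v u = d w u := by
  obtain ⟨p, hp⟩ := h.1.connected.preconnected.exists_isPath w v
  by_cases hu : u ∈ p.support
  · exact .inl (h.add_eq_of_mem_support hp hu)
  · exact .inr (h.add_eq_of_mem_support (hp.concat hu huv.symm)
      (p.support_subset_support_concat _ p.end_mem_support))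

lemma add_eq_of_not_sameBranch (h : IsTreeMetric G ℓ d) {x u v : α}
    (huv : ¬G.SameBranch x u v) : d u x + d x v = d u v := by
  obtain ⟨p, hp⟩ := h.1.connected.preconnected.exists_isPath u v
  exact h.add_eq_of_mem_support hp (by_contra fun hx => huv ⟨p, hx⟩)

end IsTreeMetric

lemma div_add_one_mul_le_of_le_mul {t L ε c : ℝ} (hε : 0 ≤ ε) (hc : 0 ≤ c) (hL : 0 ≤ L)
    (htL : t ≤ c * L) : (t / L + 1) * ε ≤ (c + 1) * ε := by
  gcongr
  exact div_le_of_le_mul₀ hL hc htL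

lemma div_add_one_mul_le_half_add {t L ε : ℝ} (ht : 0 ≤ t) (hε : 0 ≤ ε) (hLε : 2 * ε ≤ L) :
    (t / L + 1) * ε ≤ t / 2 + ε := by
  rcases (show 0 ≤ L by linarith).eq_or_lt with rfl | hL
  · simp only [div_zero, zero_add, one_mul]
    linarith
  · calc (t / L + 1) * ε = t / L * ε + ε := by ring
      _ ≤ t / L * (L / 2) + ε := by gcongr; linarith
      _ = t / 2 + ε := by field_simp

section SteinerNodes

variable {X : Type*} {V : Set X} {That : SimpleGraph X} {ℓhat dhat : X → X → ℝ}
  {T : SimpleGraph V} {ℓ d : V → V → ℝ} {L ε : ℝ}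

lemma dhat_le_of_adj (hd : IsTreeMetric T ℓ d) (hedge : ∀ u v : V, T.Adj u v → ℓ u v ≤ L)
    (happrox : ∀ u v : V, |d u v - dhat u v| ≤ (d u v / L + 1) * ε) (hε : 0 ≤ ε) (hL : 0 ≤ L)
    {u v : V} (huv : T.Adj u v) : dhat u v ≤ L + 2 * ε := by
  have hduv : d u v ≤ L := hd.eq_of_adj huv ▸ hedge u v huv
  have herr := div_add_one_mul_le_of_le_mul hε zero_le_one hL (by linarith : d u v ≤ 1 * L)
  linarith [(abs_le.1 (happrox u v)).1]

lemma exists_adj_close_of_not_sameBranch (hdhat : IsTreeMetric That ℓhat dhat)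
    (hd : IsTreeMetric T ℓ d) (hedge : ∀ u v : V, T.Adj u v → ℓ u v ≤ L)
    (happrox : ∀ u v : V, |d u v - dhat u v| ≤ (d u v / L + 1) * ε) (hε : 0 ≤ ε) (hL : 0 ≤ L)
    {x : X} (hx : x ∉ V) {s t : V} (hst : ¬That.SameBranch x s t) :
    ∃ z₁ z₂ : V, T.Adj z₁ z₂ ∧ That.SameBranch x z₁ s ∧ ¬That.SameBranch x z₁ z₂ ∧
      dhat x z₁ ≤ L + 2 * ε ∧ dhat x z₂ ≤ L + 2 * ε := by
  obtain ⟨z₁, z₂, hz, hz₁, hz₂⟩ := hd.1.connected.exists_adj_mem_notMem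
    {z : V | That.SameBranch x z s} (.refl fun h => hx (h ▸ s.2)) fun h => hst h.symm
  have hsep : ¬That.SameBranch x z₁ z₂ := fun h => hz₂ (h.symm.trans hz₁)
  have hsplit := hdhat.add_eq_of_not_sameBranch hsep
  rw [hdhat.symm (z₁ : X) x] at hsplit
  have hclose := dhat_le_of_adj hd hedge happrox hε hL hz
  exact ⟨z₁, z₂, hz, hz₁, hsep, by linarith [hdhat.nonneg x z₂], by linarith [hdhat.nonneg x z₁]⟩

lemma exists_close_separated_triple [Finite X] (hdhat : IsTreeMetric That ℓhat dhat)
    (hdeg : ∀ x : X, x ∉ V → 3 ≤ (That.neighborSet x).ncard) (hd : IsTreeMetric T ℓ d)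
    (hedge : ∀ u v : V, T.Adj u v → ℓ u v ≤ L)
    (happrox : ∀ u v : V, |d u v - dhat u v| ≤ (d u v / L + 1) * ε) (hε : 0 ≤ ε) (hL : 0 ≤ L)
    {x : X} (hx : x ∉ V) :
    ∃ m z₁ z₂ : V, T.Adj z₁ z₂ ∧ ¬That.SameBranch x m z₁ ∧ ¬That.SameBranch x m z₂ ∧
      ¬That.SameBranch x z₁ z₂ ∧
      dhat x m ≤ L + 2 * ε ∧ dhat x z₁ ≤ L + 2 * ε ∧ dhat x z₂ ≤ L + 2 * ε := by
  have hG := hdhat.1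
  obtain ⟨y₁, y₂, y₃, h₁, h₂, h₃, h₁₂, h₁₃, h₂₃⟩ := (Set.two_lt_ncard_iff (Set.toFinite _)).1 (hdeg x hx)
  have hbranch : ∀ {y}, That.Adj x y → ∃ w : V, That.SameBranch x w y := fun hy => by
    obtain ⟨w, hw, hleaf⟩ := hG.exists_sameBranch_ncard_neighborSet_le_one hy
    have hwV : w ∈ V := by
      by_contra hwV
      have := hdeg w hwV
      omega
    exact ⟨⟨w, hwV⟩, hw⟩
  obtain ⟨w₁, hw₁⟩ := hbranch h₁
  obtain ⟨w₂, hw₂⟩ := hbranch h₂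
  obtain ⟨w₃, hw₃⟩ := hbranch h₃
  obtain ⟨z₁, z₂, hz, hz₁, hz₁₂, hxz₁, hxz₂⟩ := exists_adj_close_of_not_sameBranch hdhat hd hedge
    happrox hε hL hx (hG.not_sameBranch h₁ h₂ h₁₂ hw₁ hw₂)
  obtain ⟨y, w, hy, hy₁, hw, hz₂y⟩ : ∃ y, ∃ w : V, That.Adj x y ∧ y ≠ y₁ ∧
      That.SameBranch x w y ∧ ¬That.SameBranch x z₂ y := by
    by_cases h : That.SameBranch x z₂ y₂
    · exact ⟨y₃, w₃, h₃, h₁₃.symm, hw₃, hG.not_sameBranch h₂ h₃ h₂₃ h (.refl h₃.ne')⟩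
    · exact ⟨y₂, w₂, h₂, h₁₂.symm, hw₂, h⟩
  obtain ⟨m, -, -, hm, -, hxm, -⟩ := exists_adj_close_of_not_sameBranch hdhat hd hedge happrox hε hL
    hx (hG.not_sameBranch hy h₁ hy₁ hw hw₁)
  have hmy := hm.trans hw
  exact ⟨m, z₁, z₂, hz, hG.not_sameBranch hy h₁ hy₁ hmy (hz₁.trans hw₁),
    fun h => hz₂y (h.symm.trans hmy), hz₁₂, hxm, hxz₁, hxz₂⟩

lemma dhat_le_of_add_eq (hdhat : IsTreeMetric That ℓhat dhat) (hd : IsTreeMetric T ℓ d)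
    (hedge : ∀ u v : V, T.Adj u v → ℓ u v ≤ L)
    (happrox : ∀ u v : V, |d u v - dhat u v| ≤ (d u v / L + 1) * ε) (hε : 0 ≤ ε)
    (hLε : 2 * ε ≤ L) {x : X} {m b f : V} (hbf : T.Adj b f) (hmb : ¬That.SameBranch x m b)
    (hmf : ¬That.SameBranch x m f) (hbf' : ¬That.SameBranch x b f)
    (hpath : d m b + d b f = d m f) (hxm : dhat x m ≤ L + 2 * ε) (hxf : dhat x f ≤ L + 2 * ε) :
    dhat x b ≤ 11 * ε := by
  have hL : 0 ≤ L := by linarith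
  have smb := hdhat.add_eq_of_not_sameBranch hmb
  have smf := hdhat.add_eq_of_not_sameBranch hmf
  have sbf := hdhat.add_eq_of_not_sameBranch hbf'
  rw [hdhat.symm (m : X) x] at smb smf
  rw [hdhat.symm (b : X) x] at sbf
  have hdbf : d b f ≤ L := hd.eq_of_adj hbf ▸ hedge b f hbf
  have hdmf : d m f ≤ 9 * L := by
    linarith [(abs_le.1 (happrox m f)).2, div_add_one_mul_le_half_add (hd.nonneg m f) hε hLε]
  have emb := div_add_one_mul_le_of_le_mul hε (by norm_num) hL
    (by linarith [hd.nonneg b f] : d m b ≤ 9 * L)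
  have ebf := div_add_one_mul_le_of_le_mul hε zero_le_one hL (by linarith : d b f ≤ 1 * L)
  have emf := div_add_one_mul_le_of_le_mul hε (by norm_num) hL hdmf
  linarith [abs_le.1 (happrox m b), abs_le.1 (happrox b f), abs_le.1 (happrox m f)]

end SteinerNodes

theorem steiner_nodes_close_general
    {X : Type*} [Finite X] (V : Set X)
    (L ε : ℝ) (hε : 0 ≤ ε) (hLε : 2 * ε ≤ L)
    (That : SimpleGraph X) (ℓhat : X → X → ℝ) (dhat : X → X → ℝ)
    (hdhat : IsTreeMetric That ℓhat dhat)
    (hdeg : ∀ x : X, x ∉ V → 3 ≤ (That.neighborSet x).ncard)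
    (T : SimpleGraph ↥V) (ℓ : ↥V → ↥V → ℝ) (d : ↥V → ↥V → ℝ)
    (hd : IsTreeMetric T ℓ d)
    (hedge : ∀ u v : ↥V, T.Adj u v → ℓ u v ≤ L)
    (happrox : ∀ u v : ↥V, |d u v - dhat (u : X) (v : X)| ≤ (d u v / L + 1) * ε) :
    ∀ x : X, ∃ v ∈ V, dhat x v ≤ 30 * ε := by
  intro x
  by_cases hx : x ∈ V
  · exact ⟨x, hx, by rw [hdhat.self_eq_zero]; linarith⟩
  obtain ⟨m, z₁, z₂, hz, hm₁, hm₂, h₁₂, hxm, hxz₁, hxz₂⟩ :=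
    exists_close_separated_triple hdhat hdeg hd hedge happrox hε (by linarith) hx
  rcases hd.add_eq_or_add_eq_of_adj hz m with h | h
  · exact ⟨z₁, z₁.2, (dhat_le_of_add_eq hdhat hd hedge happrox hε hLε hz hm₁ hm₂ h₁₂ h hxm
      hxz₂).trans (by linarith)⟩
  · exact ⟨z₂, z₂.2, (dhat_le_of_add_eq hdhat hd hedge happrox hε hLε hz.symm hm₂ hm₁
      (fun h' => h₁₂ h'.symm) h hxm hxz₁).trans (by linarith)⟩

/-- **Every Steiner node is `30ε`-close to a non-Steiner node.** Let `L ≥ 2ε ≥ 0`. Let `T̂` be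
a finite tree on vertex set `X` with tree metric `d̂`, in which every Steiner node (vertex
outside the nonempty set `V ⊆ X`) has degree at least `3`. Let `T` be a finite tree on `V`
with edge lengths at most `L` and tree metric `d` satisfying
`|d(u,v) − d̂(u,v)| ≤ (d(u,v)/L + 1)·ε` for all `u, v ∈ V`. Then every vertex `x ∈ X` has some
`v ∈ V` with `d̂(x,v) ≤ 30ε`. -/
theorem steiner_nodes_close
    {X : Type*} [Finite X] (V : Set X) (hVne : V.Nonempty)
    (L ε : ℝ) (hε : 0 ≤ ε) (hLε : 2 * ε ≤ L)
    (That : SimpleGraph X) (ℓhat : X → X → ℝ) (dhat : X → X → ℝ)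
    (hdhat : IsTreeMetric That ℓhat dhat)
    (hdeg : ∀ x : X, x ∉ V → 3 ≤ (That.neighborSet x).ncard)
    (T : SimpleGraph ↥V) (ℓ : ↥V → ↥V → ℝ) (d : ↥V → ↥V → ℝ)
    (hd : IsTreeMetric T ℓ d)
    (hedge : ∀ u v : ↥V, T.Adj u v → ℓ u v ≤ L)
    (happrox : ∀ u v : ↥V, |d u v - dhat (u : X) (v : X)| ≤ (d u v / L + 1) * ε) :
    ∀ x : X, ∃ v ∈ V, dhat x v ≤ 30 * ε :=
  steiner_nodes_close_general V L ε hε hLε That ℓhat dhat hdhat hdeg T ℓ d hd hedge happrox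
end
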